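/- arXiv:1706.09286 — 10 statements merged into one kernel-verified Lean document; each statement's English description precedes it below -/
import Mathlib

section
/- If a finite p-group P contains a cyclic subgroup of order p^{k_1} and an elementary abelian subgroup of rank k_2, then |P| ≥ p^{k_1 + k_2 - 1}. -/
/-!
Counting cosets gives `|H| |K| ≤ |P| |H ⊓ K|`. The intersection `H ⊓ K` is a subgroup of the
cyclic group `H`, hence cyclic, and has exponent dividing `p` as a subgroup of `K`; a cyclic group
has order equal to its exponent, so `|H ⊓ K| ≤ p`. Thus `p ^ (k₁ + k₂) ≤ |P| p`.
-/

namespace Subgroup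

variable {G : Type*} [Group G]

theorem relIndex_le_index [Finite G] (H K : Subgroup G) : H.relIndex K ≤ H.index := by
  rw [← relIndex_top_right]
  exact relIndex_le_of_le_right le_top (by rw [relIndex_top_right]; exact index_ne_zero_of_finite)

theorem relIndex_mul_card_inf (H K : Subgroup G) :
    H.relIndex K * Nat.card ↥(H ⊓ K) = Nat.card K := by
  rw [← inf_relIndex_right, ← relIndex_bot_left, ← relIndex_bot_left, mul_comm,
    relIndex_mul_relIndex _ _ _ bot_le inf_le_right]

theorem card_mul_card_le_card_mul_card_inf [Finite G] (H K : Subgroup G) :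
    Nat.card H * Nat.card K ≤ Nat.card G * Nat.card ↥(H ⊓ K) :=
  calc Nat.card H * Nat.card K = Nat.card H * H.relIndex K * Nat.card ↥(H ⊓ K) := by
        rw [mul_assoc, relIndex_mul_card_inf]
    _ ≤ Nat.card H * H.index * Nat.card ↥(H ⊓ K) := by gcongr; exact relIndex_le_index H K
    _ = Nat.card G * Nat.card ↥(H ⊓ K) := by rw [mul_comm (Nat.card H), index_mul_card]

theorem card_inf_dvd_of_isCyclic_of_forall_pow_eq_one {H K : Subgroup G} [IsCyclic H] {n : ℕ}
    (hK : ∀ a : K, a ^ n = 1) : Nat.card ↥(H ⊓ K) ∣ n := by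
  have : IsCyclic ↥(H ⊓ K) :=
    isCyclic_of_surjective (subgroupOfEquivOfLe inf_le_left).toMonoidHom
      (subgroupOfEquivOfLe inf_le_left).surjective
  rw [← IsCyclic.exponent_eq_card]
  refine Monoid.exponent_dvd_of_forall_pow_eq_one fun a => Subtype.ext ?_
  simpa using congrArg Subtype.val (hK ⟨a, a.2.2⟩)

end Subgroup

theorem stmt0_general {p : ℕ} (hp : p.Prime) (P : Type*) [Group P] [Finite P]
    (k₁ k₂ : ℕ) (H K : Subgroup P)
    (hHcyc : IsCyclic H) (hHcard : Nat.card H = p ^ k₁)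
    (hKexp : ∀ a : K, a ^ p = 1)
    (hKcard : Nat.card K = p ^ k₂) :
    p ^ (k₁ + k₂ - 1) ≤ Nat.card P := by
  rcases Nat.eq_zero_or_pos (k₁ + k₂) with hzero | hpos
  · rw [hzero]; exact Nat.card_pos
  have hinf : Nat.card ↥(H ⊓ K) ≤ p :=
    Nat.le_of_dvd hp.pos (Subgroup.card_inf_dvd_of_isCyclic_of_forall_pow_eq_one hKexp)
  have hmain : p ^ (k₁ + k₂ - 1) * p ≤ Nat.card P * p :=
    calc p ^ (k₁ + k₂ - 1) * p = p ^ (k₁ + k₂) := by rw [← pow_succ, Nat.sub_add_cancel hpos]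
      _ = Nat.card H * Nat.card K := by rw [hHcard, hKcard, pow_add]
      _ ≤ Nat.card P * Nat.card ↥(H ⊓ K) := H.card_mul_card_le_card_mul_card_inf K
      _ ≤ Nat.card P * p := by gcongr
  exact Nat.le_of_mul_le_mul_right hmain hp.pos

/-- If a finite `p`-group `P` contains a cyclic subgroup of order `p ^ k₁` and an
elementary abelian subgroup of rank `k₂` (order `p ^ k₂`),
then `|P| ≥ p ^ (k₁ + k₂ - 1)`. -/
theorem stmt0 {p : ℕ} (hp : p.Prime) (P : Type*) [Group P] [Finite P]
    (hP : IsPGroup p P) (k₁ k₂ : ℕ) (H K : Subgroup P)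
    (hHcyc : IsCyclic H) (hHcard : Nat.card H = p ^ k₁)
    (hKab : ∀ a b : K, a * b = b * a) (hKexp : ∀ a : K, a ^ p = 1)
    (hKcard : Nat.card K = p ^ k₂) :
    p ^ (k₁ + k₂ - 1) ≤ Nat.card P :=
  stmt0_general hp P k₁ k₂ H K hHcyc hHcard hKexp hKcard
end

section
/- Let p be a prime and G a finite group such that every group of order p^k embeds into G. Then p^{2k-1} divides |G|. -/
/-!
The cyclic group of order `p ^ k` and the elementary abelian group of order `p ^ k` both embed
into `G`; after conjugation both images lie in one Sylow `p`-subgroup `P`. Their intersection is a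
subgroup of a cyclic group of exponent dividing `p`, hence has order at most `p`, so the product
formula gives `|P| ≥ p ^ k * p ^ k / p`, and `|P|` is a power of `p` dividing `|G|`.
-/

open Subgroup

section

variable {G : Type*} [Group G]

lemma Subgroup.relIndex_mul_card_inf_s1 (H K : Subgroup G) :
    H.relIndex K * Nat.card ↥(H ⊓ K) = Nat.card K := by
  rw [relIndex, ← (H.subgroupOf K).index_mul_card, ← inf_subgroupOf_right,
    Nat.card_congr (subgroupOfEquivOfLe (inf_le_right : H ⊓ K ≤ K)).toEquiv]

lemma Subgroup.card_mul_card_le_card_mul_card_inf_s1 {H K L : Subgroup G}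
    [Finite L] (hH : H ≤ L) (hK : K ≤ L) :
    Nat.card H * Nat.card K ≤ Nat.card L * Nat.card ↥(H ⊓ K) := by
  have hHL : H.relIndex L * Nat.card H = Nat.card L := by
    simpa [inf_of_le_left hH] using H.relIndex_mul_card_inf_s1 L
  have hHL0 : H.relIndex L ≠ 0 := by
    rintro h
    simp [h, eq_comm, Nat.card_pos.ne'] at hHL
  calc Nat.card H * Nat.card K = Nat.card H * H.relIndex K * Nat.card ↥(H ⊓ K) := by
        rw [mul_assoc, H.relIndex_mul_card_inf_s1 K]
    _ ≤ Nat.card H * H.relIndex L * Nat.card ↥(H ⊓ K) := by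
        gcongr; exact relIndex_le_of_le_right hK hHL0
    _ = Nat.card L * Nat.card ↥(H ⊓ K) := by rw [mul_comm (Nat.card H), hHL]

lemma Subgroup.card_inf_dvd_exponent (H K : Subgroup G) [IsCyclic K] :
    Nat.card ↥(H ⊓ K) ∣ Monoid.exponent H := by
  have : IsCyclic ↥(H ⊓ K) := isCyclic_of_le inf_le_right
  rw [← IsCyclic.exponent_eq_card]
  exact Monoid.exponent_dvd_of_monoidHom _ (inclusion_injective inf_le_left)

lemma Sylow.exists_mem_orderOf_eq {p : ℕ} [Fact p.Prime] [Finite G]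
    (P : Sylow p G) {x : G} (hx : IsPGroup p (zpowers x)) :
    ∃ y ∈ P, orderOf y = orderOf x := by
  obtain ⟨Q, hxQ⟩ := hx.exists_le_sylow
  obtain ⟨g, rfl⟩ := MulAction.exists_smul_eq G Q P
  refine ⟨MulAut.conj g x, ?_, MulEquiv.orderOf_eq _ x⟩
  rw [← SetLike.mem_coe, Sylow.coe_smul]
  exact Set.smul_mem_smul_set (hxQ (mem_zpowers x))

theorem pow_dvd_card_of_orderOf_eq_of_exponent_dvd [Finite G] {p : ℕ} [Fact p.Prime] {a b : ℕ}
    {x : G} (hx : orderOf x = p ^ a) {E : Subgroup G} (hE : Nat.card E = p ^ b)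
    (hexp : Monoid.exponent E ∣ p) :
    p ^ (a + b - 1) ∣ Nat.card G := by
  obtain ⟨P, hEP⟩ := (IsPGroup.of_card hE).exists_le_sylow
  obtain ⟨y, hyP, hy⟩ := P.exists_mem_orderOf_eq (x := x)
    (IsPGroup.of_card (by rw [Nat.card_zpowers, hx]))
  obtain ⟨m, hP⟩ := P.2.exists_card_eq
  have hpos := (Fact.out : p.Prime).pos
  have hinf : Nat.card ↥(E ⊓ zpowers y) ≤ p :=
    Nat.le_of_dvd hpos ((E.card_inf_dvd_exponent _).trans hexp)
  have hcount : p ^ (b + a) ≤ p ^ (m + 1) := by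
    calc p ^ (b + a) = Nat.card E * Nat.card (zpowers y) := by
          rw [Nat.card_zpowers, hy, hx, hE, pow_add]
      _ ≤ Nat.card P * Nat.card ↥(E ⊓ zpowers y) :=
          card_mul_card_le_card_mul_card_inf_s1 hEP (zpowers_le.mpr hyP)
      _ ≤ p ^ m * p := by rw [hP]; gcongr
      _ = p ^ (m + 1) := (pow_succ p m).symm
  have hle : a + b - 1 ≤ m := by
    have := (Nat.pow_le_pow_iff_right (Fact.out : p.Prime).one_lt).mp hcount
    omega
  exact (pow_dvd_pow p hle).trans (hP ▸ P.card_subgroup_dvd_card)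

end

theorem stmt1_general {p : ℕ} (hp : p.Prime) (k : ℕ)
    (G : Type*) [Group G] [Finite G]
    (hemb : ∀ (H : Type) [Group H] [Finite H], Nat.card H = p ^ k →
      ∃ f : H →* G, Function.Injective f) :
    p ^ (2 * k - 1) ∣ Nat.card G := by
  have : Fact p.Prime := ⟨hp⟩
  obtain ⟨f, hf⟩ := hemb (Multiplicative (ZMod (p ^ k))) (by simp)
  obtain ⟨g, hg⟩ := hemb (Multiplicative (Fin k → ZMod p)) (by simp)
  rw [two_mul]
  refine pow_dvd_card_of_orderOf_eq_of_exponent_dvd (x := f (.ofAdd 1)) (E := g.range) ?_ ?_ ?_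
  · rw [orderOf_injective f hf, orderOf_ofAdd_eq_addOrderOf, ZMod.addOrderOf_one]
  · rw [← Nat.card_congr (MonoidHom.ofInjective hg).toEquiv]
    simp
  · rw [← Monoid.exponent_eq_of_mulEquiv (MonoidHom.ofInjective hg), Monoid.exponent_multiplicative]
    exact AddMonoid.exponent_dvd_of_forall_nsmul_eq_zero fun v ↦ by ext; simp

/-- If every group of order `p ^ k` embeds into the finite group `G`,
then `p ^ (2 * k - 1)` divides `|G|`. -/
theorem stmt1 {p : ℕ} (hp : p.Prime) (k : ℕ) (hk : 1 ≤ k)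
    (G : Type*) [Group G] [Finite G]
    (hemb : ∀ (H : Type) [Group H] [Finite H], Nat.card H = p ^ k →
      ∃ f : H →* G, Function.Injective f) :
    p ^ (2 * k - 1) ∣ Nat.card G :=
  stmt1_general hp k G hemb
end

section
/- Let G be a group of order 32 containing an abelian subgroup H of order 16 and exponent at most 4. Then not every group of order 8 embeds into G; specifically, it is impossible that C_8, C_2 × C_2 × C_2, and the quaternion group Q_8 all embed into G. -/
/-!
An element `x` of order 8 cannot lie in `H`, which has exponent 4 and is normal of index 2.
For `y ∉ H` and `h ∈ H` we have `(y h)² = y² φ(h)` with `φ(h) = y⁻¹ h y h`, an endomorphism of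
the abelian group `H` that does not depend on `y`. The copy of `Q₈` provides `i ∈ H` of order 4
and `j ∉ H` with `j⁻¹ i j = i⁻¹`, so `i ∈ ker φ`, and `j⁴ = 1`.

If the copy `E` of `C₂ × C₂ × C₂` lies in `H`, then `|H| = 16` forces the squares of `H` to be
`⟨x⁴⟩`, which `φ` kills; hence `φ(h)² = 1` and every `y = x h ∉ H` has `y⁴ = x⁴ ≠ 1`,
contradicting `j⁴ = 1`. Otherwise some involution `e ∈ E` lies outside `H`; then
`x² = φ(e⁻¹ x)` has order 4, so `|ker φ| ≤ 4`, while `ker φ ⊇ E ∩ H` and `|E ∩ H| ≥ 4`.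
Thus `ker φ = E ∩ H` has exponent 2, contradicting `i ∈ ker φ`.
-/

open scoped IsMulCommutative

theorem MonoidHom.card_ker_mul_card_range {G G' : Type*} [Group G] [Group G'] (f : G →* G') :
    Nat.card f.ker * Nat.card f.range = Nat.card G := by
  rw [← Subgroup.index_ker f, Subgroup.card_mul_index]

namespace Subgroup

variable {G : Type*} [Group G] {H : Subgroup G}

theorem card_le_two_mul_card_subgroupOf (hidx : H.index = 2) (K : Subgroup G) :
    Nat.card K ≤ 2 * Nat.card (H.subgroupOf K) := by
  have := normal_of_index_eq_two hidx
  have hrel : H.relIndex K ≤ 2 := Nat.le_of_dvd two_pos (hidx ▸ H.relIndex_dvd_index_of_normal K)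
  rw [← (H.subgroupOf K).card_mul_index]
  exact (Nat.mul_le_mul_left _ hrel).trans_eq (mul_comm _ _)

theorem card_range_sq_le_two [IsMulCommutative H] [Finite H] {E : Subgroup G} (hEH : E ≤ H)
    (hE2 : ∀ a ∈ E, a ^ 2 = 1) (hcard : Nat.card H ≤ 2 * Nat.card E) :
    Nat.card (powMonoidHom 2 : H →* H).range ≤ 2 := by
  have hker : Nat.card E ≤ Nat.card (powMonoidHom 2 : H →* H).ker :=
    Nat.card_le_card_of_injective (fun a ↦ ⟨⟨a, hEH a.2⟩, Subtype.ext (hE2 a a.2)⟩)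
      fun a b hab ↦ Subtype.ext (congrArg (fun c : (powMonoidHom 2 : H →* H).ker ↦ (c : G)) hab)
  have := (powMonoidHom 2 : H →* H).card_ker_mul_card_range
  have : 0 < Nat.card (powMonoidHom 2 : H →* H).ker := Nat.card_pos
  nlinarith

theorem exists_conj_eq_inv_of_injective_quaternionGroup [IsMulCommutative H]
    (hidx : H.index = 2) {f : QuaternionGroup 2 →* G} (hf : Function.Injective f) :
    ∃ i ∈ H, ∃ j ∉ H, i ^ 2 ≠ 1 ∧ j⁻¹ * i * j = i⁻¹ ∧ j ^ 4 = 1 := by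
  obtain ⟨a, b, hab, ha, hb⟩ : ∃ a b : QuaternionGroup 2, a * b ≠ b * a ∧ f a ∈ H ∧ f b ∉ H := by
    have hcomm {a b} (ha : f a ∈ H) (hb : f b ∈ H) : a * b = b * a :=
      hf (by simpa using setLike_mul_comm ha hb)
    by_cases hi : f (.a 1) ∈ H <;> by_cases hj : f (.xa 0) ∈ H
    · exact absurd (hcomm hi hj) (by decide)
    · exact ⟨_, _, by decide, hi, hj⟩
    · exact ⟨_, _, by decide, hj, hi⟩
    · refine ⟨.a 1 * .xa 0, .a 1, by decide, ?_, hi⟩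
      rw [map_mul, mul_mem_iff_of_index_two hidx]
      tauto
  obtain ⟨ha2, hba, hb4⟩ : a ^ 2 ≠ 1 ∧ b⁻¹ * a * b = a⁻¹ ∧ b ^ 4 = 1 :=
    (by decide : ∀ a b : QuaternionGroup 2, a * b ≠ b * a →
      a ^ 2 ≠ 1 ∧ b⁻¹ * a * b = a⁻¹ ∧ b ^ 4 = 1) a b hab
  refine ⟨f a, ha, f b, hb, ?_, ?_, ?_⟩
  · rw [← map_pow, ← map_one f]
    exact hf.ne ha2
  · rw [← map_inv, ← map_mul, ← map_mul, hba, map_inv]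
  · rw [← map_pow, hb4, map_one]

def conjMulSelf (H : Subgroup G) [H.Normal] [IsMulCommutative H] (y : G) : H →* H :=
  (MulAut.conjNormal y⁻¹).toMonoidHom * MonoidHom.id H

section conjMulSelf

variable [H.Normal] [IsMulCommutative H]

@[simp]
theorem coe_conjMulSelf_apply (y : G) (h : H) :
    (H.conjMulSelf y h : G) = y⁻¹ * h * y * h := by
  simp [conjMulSelf]

theorem mem_ker_conjMulSelf_iff {y : G} {h : H} :
    h ∈ (H.conjMulSelf y).ker ↔ y⁻¹ * h * y = (h : G)⁻¹ := by
  rw [MonoidHom.mem_ker, ← OneMemClass.coe_eq_one, coe_conjMulSelf_apply, mul_eq_one_iff_eq_inv]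

theorem sq_mul_eq_sq_mul_conjMulSelf (y : G) (h : H) :
    (y * h) ^ 2 = y ^ 2 * H.conjMulSelf y h := by
  rw [sq, sq, coe_conjMulSelf_apply]
  group

theorem conjMulSelf_eq_of_notMem (hidx : H.index = 2) {y z : G} (hy : y ∉ H) (hz : z ∉ H) :
    H.conjMulSelf y = H.conjMulSelf z := by
  have hyz : y⁻¹ * z ∈ H := by
    rw [mul_mem_iff_of_index_two hidx, inv_mem_iff]
    tauto
  ext h
  have hconj : y⁻¹ * h * y ∈ H := by simpa using Normal.conj_mem inferInstance _ h.2 y⁻¹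
  simp only [coe_conjMulSelf_apply, mul_left_inj]
  calc y⁻¹ * h * y = (y⁻¹ * z)⁻¹ * ((y⁻¹ * z) * (y⁻¹ * h * y)) := by group
    _ = (y⁻¹ * z)⁻¹ * ((y⁻¹ * h * y) * (y⁻¹ * z)) := by rw [setLike_mul_comm hyz hconj]
    _ = z⁻¹ * h * z := by group

theorem pow_four_eq_of_notMem [Finite H] (hidx : H.index = 2)
    (hsq : Nat.card (powMonoidHom 2 : H →* H).range ≤ 2)
    {x y : G} (hx : x ∉ H) (hx8 : orderOf x = 8) (hy : y ∉ H) : y ^ 4 = x ^ 4 := by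
  have hx2 : x ^ 2 ∈ H := sq_mem_of_index_two hidx x
  set z : H := ⟨x ^ 4, by simpa [← pow_mul] using H.pow_mem hx2 2⟩
  have hz : z ∈ (powMonoidHom 2 : H →* H).range :=
    ⟨⟨x ^ 2, hx2⟩, Subtype.ext (by simp [z, ← pow_mul])⟩
  have hzo : orderOf z = 2 := by
    rw [← orderOf_coe, orderOf_pow' _ four_ne_zero, hx8]; rfl
  have hsq_eq : zpowers z = (powMonoidHom 2 : H →* H).range :=
    eq_of_le_of_card_ge (zpowers_le.mpr hz) (by rw [Nat.card_zpowers, hzo]; exact hsq)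
  have hsq_ker : (powMonoidHom 2 : H →* H).range ≤ (H.conjMulSelf x).ker := by
    rw [← hsq_eq, zpowers_le, mem_ker_conjMulSelf_iff]
    have hpow : x ^ 8 = 1 := hx8 ▸ pow_orderOf_eq_one x
    show x⁻¹ * x ^ 4 * x = (x ^ 4)⁻¹
    rw [eq_inv_iff_mul_eq_one, ← hpow]
    group
  have hxy : x⁻¹ * y ∈ H := by
    rw [mul_mem_iff_of_index_two hidx, inv_mem_iff]; tauto
  set h : H := ⟨x⁻¹ * y, hxy⟩
  have hy2 : y ^ 2 = x ^ 2 * H.conjMulSelf x h := by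
    simpa [h] using sq_mul_eq_sq_mul_conjMulSelf x h
  have hφ : (H.conjMulSelf x h : G) ^ 2 = 1 := by
    rw [← H.coe_pow, ← map_pow]
    exact congrArg Subtype.val (hsq_ker ⟨h, rfl⟩)
  calc y ^ 4 = (x ^ 2 * H.conjMulSelf x h) ^ 2 := by rw [← hy2, ← pow_mul]
    _ = x ^ 4 := by
      rw [(show Commute _ _ from setLike_mul_comm hx2 (H.conjMulSelf x h).2).mul_pow, hφ,
        mul_one, ← pow_mul]

theorem four_le_card_range_conjMulSelf [Finite H] (hidx : H.index = 2) {e x : G} (he : e ∉ H)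
    (he2 : e ^ 2 = 1) (hx : x ∉ H) (hx8 : orderOf x = 8) :
    4 ≤ Nat.card (H.conjMulSelf e).range := by
  have hex : e⁻¹ * x ∈ H := by
    rw [mul_mem_iff_of_index_two hidx, inv_mem_iff]; tauto
  have hsq : (H.conjMulSelf e ⟨e⁻¹ * x, hex⟩ : G) = x ^ 2 := by
    simpa [he2] using (sq_mul_eq_sq_mul_conjMulSelf e ⟨e⁻¹ * x, hex⟩).symm
  have horder : orderOf (H.conjMulSelf e ⟨e⁻¹ * x, hex⟩) = 4 := by
    rw [← orderOf_coe, hsq, orderOf_pow' _ two_ne_zero, hx8]; rfl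
  calc 4 = Nat.card (zpowers (H.conjMulSelf e ⟨e⁻¹ * x, hex⟩)) := by
        rw [Nat.card_zpowers, horder]
    _ ≤ _ := card_le_of_le (zpowers_le.mpr (MonoidHom.mem_range.mpr ⟨_, rfl⟩))

theorem sq_eq_one_of_inv_mul_mul_eq_inv [Finite G] (hidx : H.index = 2)
    {E : Subgroup G} (hE2 : ∀ a ∈ E, a ^ 2 = 1) (hEH : ¬E ≤ H)
    (hcard : Nat.card H ≤ 2 * Nat.card E) {x : G} (hx : x ∉ H) (hx8 : orderOf x = 8)
    {i j : G} (hi : i ∈ H) (hj : j ∉ H) (hji : j⁻¹ * i * j = i⁻¹) : i ^ 2 = 1 := by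
  obtain ⟨e, heE, heH⟩ := Set.not_subset.mp hEH
  have hker : Nat.card (H.conjMulSelf e).ker ≤ Nat.card (H.subgroupOf E) := by
    have := (H.conjMulSelf e).card_ker_mul_card_range
    have := four_le_card_range_conjMulSelf hidx heH (hE2 e heE) hx hx8
    have := card_le_two_mul_card_subgroupOf hidx E
    nlinarith
  -- `e` inverts `a ∈ E` because `e` and `e * a` are involutions
  have hle : (H.subgroupOf E).map E.subtype ≤ (H.conjMulSelf e).ker.map H.subtype := by
    rintro _ ⟨a, ha, rfl⟩
    refine ⟨⟨a, ha⟩, mem_ker_conjMulSelf_iff.mpr ?_, rfl⟩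
    have hea := hE2 _ (E.mul_mem heE a.2)
    rw [inv_eq_of_mul_eq_one_right (pow_two e ▸ hE2 e heE), eq_inv_iff_mul_eq_one, ← hea, sq]
    group
  have heq := eq_of_le_of_card_ge hle (by
    rwa [card_map_of_injective H.subtype_injective, card_map_of_injective E.subtype_injective])
  have hiE : i ∈ (H.subgroupOf E).map E.subtype := by
    rw [heq]
    refine ⟨⟨i, hi⟩, ?_, rfl⟩
    rw [conjMulSelf_eq_of_notMem hidx heH hj]
    exact mem_ker_conjMulSelf_iff.mpr hji
  obtain ⟨a, -, rfl⟩ := hiE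
  exact hE2 a a.2

end conjMulSelf

end Subgroup

/-- If `G` has order 32 and contains an abelian subgroup `H` of order 16 and exponent at
most 4, then it is impossible that `C₈`, `C₂ × C₂ × C₂` and the quaternion group `Q₈`
all embed into `G`. -/
theorem stmt2 (G : Type*) [Group G] (hG : Nat.card G = 32)
    (H : Subgroup G) (hHcard : Nat.card H = 16)
    (hHab : ∀ a b : H, a * b = b * a) (hHexp : ∀ a : H, a ^ 4 = 1) :
    ¬ ((∃ f : Multiplicative (ZMod 8) →* G, Function.Injective f) ∧
       (∃ f : Multiplicative (ZMod 2 × ZMod 2 × ZMod 2) →* G, Function.Injective f) ∧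
       (∃ f : QuaternionGroup 2 →* G, Function.Injective f)) := by
  rintro ⟨⟨c, hc⟩, ⟨e, he⟩, ⟨q, hq⟩⟩
  have : Finite G := Nat.finite_of_card_ne_zero (by omega)
  have hidx : H.index = 2 := by
    have := H.card_mul_index
    rw [hG, hHcard] at this
    omega
  have := Subgroup.normal_of_index_eq_two hidx
  have : IsMulCommutative H := .of_comm hHab
  set x := c (Multiplicative.ofAdd 1)
  have hx8 : orderOf x = 8 := by
    rw [orderOf_injective c hc, orderOf_ofAdd_eq_addOrderOf, ZMod.addOrderOf_one]
  have hx4 : x ^ 4 ≠ 1 := pow_ne_one_of_lt_orderOf four_ne_zero (by omega)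
  have hx : x ∉ H := fun hxH ↦ hx4 (by simpa using congrArg Subtype.val (hHexp ⟨x, hxH⟩))
  obtain ⟨i, hi, j, hj, hi2, hji, hj4⟩ :=
    Subgroup.exists_conj_eq_inv_of_injective_quaternionGroup hidx hq
  have hE2 : ∀ a ∈ e.range, a ^ 2 = 1 := by
    rintro _ ⟨w, rfl⟩
    rw [← map_pow, (by decide : ∀ w : Multiplicative (ZMod 2 × ZMod 2 × ZMod 2), w ^ 2 = 1),
      map_one]
  have hEcard : Nat.card H ≤ 2 * Nat.card e.range := by
    rw [hHcard, ← Nat.card_congr (MonoidHom.ofInjective he).toEquiv]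
    simp [Nat.card_eq_fintype_card]
  by_cases hEH : e.range ≤ H
  · have hsq := Subgroup.card_range_sq_le_two hEH hE2 hEcard
    exact hx4 ((Subgroup.pow_four_eq_of_notMem hidx hsq hx hx8 hj).symm.trans hj4)
  · exact hi2 (Subgroup.sq_eq_one_of_inv_mul_mul_eq_inv hidx hE2 hEH hEcard hx hx8 hi hj hji)
end

section
/- Every group of order 8 embeds into the direct product C_2 × QD_16, where QD_16 is the quasidihedral group of order 16 given by ⟨x, y | x^2 = y^8 = 1, xyx = y^3⟩. -/
/-!
A group of order 8 without an element of order 8 has exponent 2 or 4. In exponent 2 it is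
`C₂ × (C₂ × C₂)`. Otherwise take `y` of order 4: `⟨y⟩` has index 2, so any `x ∉ ⟨y⟩` satisfies
`x y x⁻¹ ∈ {y, y⁻¹}` and `x² ∈ {1, y²}`, giving `C₂ × C₄` (with `x y` in place of `x` if `x² = y²`),
`D₈` or `Q₈`. A lift of the dihedral or quaternion presentation is injective as soon as the
rotation keeps its full order and the reflection lies outside its powers; this identifies the group
with its model, and also embeds the models in `QD₁₆`: there `y`, `y²` generate `C₈`, `C₄`, and the
pairs `(y⁴, x)`, `(y², x)`, `(y², x y)` generate `C₂ × C₂`, `D₈`, `Q₈`. The extra factor `C₂` takes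
care of `C₂ × C₄` and `C₂³`. That `y` has order 8 in `QD₁₆` is read off its action on `ZMod 8` by
`x ↦ (k ↦ 3k)`, `y ↦ (k ↦ k + 1)`.

`C₂ × C₂` is modelled as `DihedralGroup 2`.
-/

/-- Relators for the quasidihedral group of order 16:
`⟨x, y ∣ x² = y⁸ = 1, x y x = y³⟩`, with `x = of true`, `y = of false`. -/
def qdRels : Set (FreeGroup Bool) :=
  {(FreeGroup.of true) ^ 2, (FreeGroup.of false) ^ 8,
   FreeGroup.of true * FreeGroup.of false * FreeGroup.of true *
     ((FreeGroup.of false) ^ 3)⁻¹}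

/-- The quasidihedral group of order 16. -/
def QD16 : Type := PresentedGroup qdRels

instance : Group QD16 := by unfold QD16; infer_instance

open Subgroup Function

section Lifts

variable {G : Type*} [Group G] {n : ℕ}

noncomputable def zmodPowersHom (g : G) (hg : g ^ n = 1) : Multiplicative (ZMod n) →* G :=
  AddMonoidHom.toMultiplicativeLeft <|
    ZMod.lift n ⟨zmultiplesHom (Additive G) (Additive.ofMul g), by
      simp [← ofMul_pow, hg]⟩

@[simp]
lemma zmodPowersHom_ofAdd_intCast (g : G) (hg : g ^ n = 1) (k : ℤ) :
    zmodPowersHom g hg (Multiplicative.ofAdd (k : ZMod n)) = g ^ k := by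
  simp [zmodPowersHom]

@[simp]
lemma zmodPowersHom_ofAdd_one (g : G) (hg : g ^ n = 1) :
    zmodPowersHom g hg (Multiplicative.ofAdd 1) = g := by
  simpa using zmodPowersHom_ofAdd_intCast g hg 1

lemma zmodPowersHom_mem_zpowers (g : G) (hg : g ^ n = 1) (i : Multiplicative (ZMod n)) :
    zmodPowersHom g hg i ∈ zpowers g := by
  obtain ⟨k, hk⟩ := ZMod.intCast_surjective (Multiplicative.toAdd i)
  rw [← ofAdd_toAdd i, ← hk, zmodPowersHom_ofAdd_intCast]
  exact zpow_mem_zpowers g k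

lemma zmodPowersHom_injective {g : G} (hg : g ^ n = 1) (hgn : orderOf g = n) :
    Injective (zmodPowersHom g hg) := by
  rw [injective_iff_map_eq_one]
  intro i hi
  obtain ⟨k, hk⟩ := ZMod.intCast_surjective (Multiplicative.toAdd i)
  rw [← ofAdd_toAdd i, ← hk, zmodPowersHom_ofAdd_intCast, ← orderOf_dvd_iff_zpow_eq_one, hgn,
    ← ZMod.intCast_zmod_eq_zero_iff_dvd] at hi
  rw [← ofAdd_toAdd i, ← hk, hi, ofAdd_zero]

lemma zmodPowersHom_mul_eq_mul_neg {a b : G} (ha : a ^ n = 1) (hab : b * a * b⁻¹ = a⁻¹)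
    (i : ZMod n) :
    zmodPowersHom a ha (.ofAdd i) * b = b * zmodPowersHom a ha (.ofAdd (-i)) := by
  obtain ⟨k, rfl⟩ := ZMod.intCast_surjective i
  have hconj : b * a ^ (-k) * b⁻¹ = a ^ k := by rw [← conj_zpow, hab, inv_zpow', neg_neg]
  rw [← Int.cast_neg, zmodPowersHom_ofAdd_intCast, zmodPowersHom_ofAdd_intCast, ← hconj]
  group

noncomputable def DihedralGroup.lift (a b : G) (ha : a ^ n = 1) (hb : b ^ 2 = 1)
    (hab : b * a * b⁻¹ = a⁻¹) : DihedralGroup n →* G where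
  toFun
    | .r i => zmodPowersHom a ha (.ofAdd i)
    | .sr i => b * zmodPowersHom a ha (.ofAdd i)
  map_one' := map_one (zmodPowersHom a ha)
  map_mul' := by
    have key := zmodPowersHom_mul_eq_mul_neg ha hab
    rintro (i | i) (j | j) <;>
      simp only [DihedralGroup.r_mul_r, DihedralGroup.r_mul_sr, DihedralGroup.sr_mul_r,
        DihedralGroup.sr_mul_sr, sub_eq_neg_add, ofAdd_add, map_mul]
    · rw [← mul_assoc _ b, key, mul_assoc]
    · rw [mul_assoc]
    · rw [mul_assoc b, ← mul_assoc _ b, key, ← mul_assoc, ← mul_assoc, ← sq, hb, one_mul]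

namespace DihedralGroup

variable {a b : G} (ha : a ^ n = 1) (hb : b ^ 2 = 1) (hab : b * a * b⁻¹ = a⁻¹)

@[simp]
lemma lift_r (i : ZMod n) : lift a b ha hb hab (r i) = zmodPowersHom a ha (.ofAdd i) := rfl

@[simp]
lemma lift_sr (i : ZMod n) : lift a b ha hb hab (sr i) = b * zmodPowersHom a ha (.ofAdd i) := rfl

lemma lift_injective (han : orderOf a = n) (hba : b ∉ zpowers a) :
    Injective (lift a b ha hb hab) := by
  rw [injective_iff_map_eq_one]
  rintro (i | i) h
  · rw [lift_r, ← map_one (zmodPowersHom a ha), (zmodPowersHom_injective ha han).eq_iff,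
      ofAdd_eq_one] at h
    rw [h, one_def]
  · rw [lift_sr, mul_eq_one_iff_eq_inv] at h
    exact absurd (h ▸ inv_mem (zmodPowersHom_mem_zpowers a ha _)) hba

end DihedralGroup

noncomputable def QuaternionGroup.lift (a b : G) (ha : a ^ (2 * n) = 1) (hb : b ^ 2 = a ^ n)
    (hab : b * a * b⁻¹ = a⁻¹) : QuaternionGroup n →* G where
  toFun
    | .a i => zmodPowersHom a ha (.ofAdd i)
    | .xa i => b * zmodPowersHom a ha (.ofAdd i)
  map_one' := map_one (zmodPowersHom a ha)
  map_mul' := by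
    have key := zmodPowersHom_mul_eq_mul_neg ha hab
    have hbn : b ^ 2 = zmodPowersHom a ha (.ofAdd n) := by
      rw [hb, ← Int.cast_natCast, zmodPowersHom_ofAdd_intCast, zpow_natCast]
    rintro (i | i) (j | j) <;>
      simp only [QuaternionGroup.a_mul_a, QuaternionGroup.a_mul_xa, QuaternionGroup.xa_mul_a,
        QuaternionGroup.xa_mul_xa, sub_eq_neg_add, ofAdd_add, map_mul]
    · rw [← mul_assoc _ b, key, mul_assoc]
    · rw [mul_assoc]
    · simp only [← mul_assoc]
      rw [mul_assoc b _ b, key, ← mul_assoc, ← sq, hbn]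
      exact congrArg (· * _) ((Commute.all _ _).map _).eq

namespace QuaternionGroup

variable {a b : G} (ha : a ^ (2 * n) = 1) (hb : b ^ 2 = a ^ n) (hab : b * a * b⁻¹ = a⁻¹)

@[simp]
lemma lift_a (i : ZMod (2 * n)) : lift a b ha hb hab (.a i) = zmodPowersHom a ha (.ofAdd i) := rfl

@[simp]
lemma lift_xa (i : ZMod (2 * n)) :
    lift a b ha hb hab (xa i) = b * zmodPowersHom a ha (.ofAdd i) := rfl

lemma lift_injective (han : orderOf a = 2 * n) (hba : b ∉ zpowers a) :
    Injective (lift a b ha hb hab) := by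
  rw [injective_iff_map_eq_one]
  rintro (i | i) h
  · rw [lift_a, ← map_one (zmodPowersHom a ha), (zmodPowersHom_injective ha han).eq_iff,
      ofAdd_eq_one] at h
    rw [h, one_def]
  · rw [lift_xa, mul_eq_one_iff_eq_inv] at h
    exact absurd (h ▸ inv_mem (zmodPowersHom_mem_zpowers a ha _)) hba

end QuaternionGroup

end Lifts

section Classification

variable {G : Type*} [Group G]

lemma Subgroup.exists_notMem_of_card_lt [Finite G] (K : Subgroup G)
    (h : Nat.card K < Nat.card G) : ∃ g, g ∉ K :=
  SetLike.exists_not_mem_of_ne_top K fun hK => h.ne (K.card_eq_iff_eq_top.2 hK)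

lemma nonempty_mulEquiv_of_injective [Finite G] {M : Type*} [Group M] (f : M →* G)
    (hf : Injective f) (hcard : Nat.card M = Nat.card G) : Nonempty (G ≃* M) :=
  ⟨(MulEquiv.ofBijective f ((Nat.bijective_iff_injective_and_card f).2 ⟨hf, hcard⟩)).symm⟩

lemma nonempty_mulEquiv_prod_of_injective [Finite G] {M : Type*} [Group M] (f : M →* G)
    (hf : Injective f) (hcard : Nat.card G = 2 * Nat.card M) {d : G} (hd : d ^ 2 = 1)
    (hdf : d ∉ f.range) (hcomm : ∀ m, Commute d (f m)) :
    Nonempty (G ≃* Multiplicative (ZMod 2) × M) := by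
  have comm (i : Multiplicative (ZMod 2)) (m : M) : Commute (zmodPowersHom d hd i) (f m) := by
    obtain ⟨k, hk⟩ := mem_zpowers_iff.1 (zmodPowersHom_mem_zpowers d hd i)
    exact hk ▸ (hcomm m).zpow_left k
  refine nonempty_mulEquiv_of_injective (MonoidHom.noncommCoprod _ f comm) ?_ ?_
  · have hd1 : d ≠ 1 := fun h => hdf (h ▸ one_mem _)
    refine (MonoidHom.noncommCoprod_injective _ f comm).2
      ⟨zmodPowersHom_injective hd (orderOf_eq_prime hd hd1), hf, disjoint_def.2 ?_⟩
    rintro _ ⟨i, rfl⟩ hi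
    fin_cases i
    · exact map_one _
    · exact absurd (zmodPowersHom_ofAdd_one d hd ▸ hi) hdf
  · simp [Nat.card_prod, hcard]

lemma eq_one_or_eq_or_eq_sq_or_eq_inv_of_mem_zpowers {y z : G} (hy : orderOf y = 4)
    (hz : z ∈ zpowers y) : z = 1 ∨ z = y ∨ z = y ^ 2 ∨ z = y⁻¹ := by
  classical
  rw [(orderOf_pos_iff.1 (hy ▸ four_pos)).mem_zpowers_iff_mem_range_orderOf, hy] at hz
  obtain ⟨k, hk, rfl⟩ := Finset.mem_image.1 hz
  rw [Finset.mem_range] at hk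
  have hy4 : y ^ 4 = 1 := hy ▸ pow_orderOf_eq_one y
  interval_cases k
  · simp
  · simp
  · simp
  · exact Or.inr <| Or.inr <| Or.inr <| eq_inv_of_mul_eq_one_left (by rwa [← pow_succ])

lemma pow_four_eq_one_of_card_eq_eight [Finite G] (hcard : Nat.card G = 8)
    (h8 : ∀ g : G, orderOf g ≠ 8) (g : G) : g ^ 4 = 1 := by
  have h : orderOf g ∣ 8 := hcard ▸ orderOf_dvd_natCard g
  obtain ⟨i, hi, he⟩ := (Nat.dvd_prime_pow (m := 3) Nat.prime_two).1 h
  rw [← orderOf_dvd_iff_pow_eq_one, he]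
  interval_cases i <;> simp_all

lemma nonempty_mulEquiv_of_sq_eq_one [Finite G] (hcard : Nat.card G = 8)
    (h2 : ∀ g : G, g ^ 2 = 1) : Nonempty (G ≃* Multiplicative (ZMod 2) × DihedralGroup 2) := by
  have hcomm : ∀ a b : G, Commute a b :=
    Commute.of_orderOf_dvd_two fun g => orderOf_dvd_of_pow_eq_one (h2 g)
  have : Nontrivial G := Finite.one_lt_card_iff_nontrivial.1 (by omega)
  obtain ⟨c, hc⟩ := exists_ne (1 : G)
  have hc2 : orderOf c = 2 := orderOf_eq_prime (h2 c) hc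
  obtain ⟨b, hb⟩ := (zpowers c).exists_notMem_of_card_lt (by rw [Nat.card_zpowers]; omega)
  have hbc : b * c * b⁻¹ = c⁻¹ := by
    rw [(hcomm b c).mul_inv_cancel, inv_eq_self_of_orderOf_eq_two hc2]
  set f := DihedralGroup.lift c b (h2 c) (h2 b) hbc
  have hf : Injective f := DihedralGroup.lift_injective _ _ _ hc2 hb
  have hrange : Nat.card f.range = 4 := by
    rw [← Nat.card_congr (MonoidHom.ofInjective hf).toEquiv, DihedralGroup.nat_card]
  obtain ⟨d, hd⟩ := f.range.exists_notMem_of_card_lt (by omega)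
  exact nonempty_mulEquiv_prod_of_injective f hf (by rw [hcard, DihedralGroup.nat_card]) (h2 d) hd
    fun m => hcomm d (f m)

lemma nonempty_mulEquiv_of_orderOf_eq_four [Finite G] (hcard : Nat.card G = 8)
    (h4 : ∀ g : G, g ^ 4 = 1) {y : G} (hy : orderOf y = 4) :
    Nonempty (G ≃* Multiplicative (ZMod 2) × Multiplicative (ZMod 4)) ∨
      Nonempty (G ≃* DihedralGroup 4) ∨ Nonempty (G ≃* QuaternionGroup 2) := by
  have hy2 : y ^ 2 ≠ 1 := pow_ne_one_of_lt_orderOf two_ne_zero (by omega)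
  have hindex : (zpowers y).index = 2 := by
    have := (zpowers y).card_mul_index
    rw [Nat.card_zpowers, hy, hcard] at this
    omega
  obtain ⟨x, hx⟩ := (zpowers y).exists_notMem_of_card_lt (by rw [Nat.card_zpowers]; omega)
  have hconj : x * y * x⁻¹ = y ∨ x * y * x⁻¹ = y⁻¹ := by
    have hmem := (normal_of_index_eq_two hindex).conj_mem y (mem_zpowers y) x
    have hord : orderOf (x * y * x⁻¹) = 4 := hy ▸ (MulAut.conj x).orderOf_eq y
    rcases eq_one_or_eq_or_eq_sq_or_eq_inv_of_mem_zpowers hy hmem with h | h | h | h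
    · simp [h] at hord
    · exact Or.inl h
    · rw [h, orderOf_pow' y two_ne_zero, hy] at hord
      norm_num at hord
    · exact Or.inr h
  have hsq : x ^ 2 = 1 ∨ x ^ 2 = y ^ 2 := by
    have hx4 : (x ^ 2) ^ 2 = 1 := by rw [← pow_mul]; exact h4 x
    rcases eq_one_or_eq_or_eq_sq_or_eq_inv_of_mem_zpowers hy (sq_mem_of_index_two hindex x)
      with h | h | h | h
    · exact Or.inl h
    · exact absurd (h ▸ hx4) hy2
    · exact Or.inr h
    · exact absurd (by rwa [h, inv_pow, inv_eq_one] at hx4) hy2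
  rcases hconj with hc | hc
  · left
    have hxy : Commute x y := mul_inv_eq_iff_eq_mul.1 hc
    obtain ⟨d, hd, hd2, hdy⟩ : ∃ d, d ∉ zpowers y ∧ d ^ 2 = 1 ∧ Commute d y := by
      rcases hsq with h | h
      · exact ⟨x, hx, h, hxy⟩
      · refine ⟨x * y, fun hm => hx ((mul_mem_cancel_right (mem_zpowers y)).1 hm), ?_,
          hxy.mul_left (Commute.refl y)⟩
        rw [hxy.mul_pow, h, ← pow_add]
        exact h4 y
    refine nonempty_mulEquiv_prod_of_injective (zmodPowersHom y (h4 y))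
      (zmodPowersHom_injective _ hy) (by simp [hcard]) hd2 ?_ fun m => ?_
    · rintro ⟨m, rfl⟩
      exact hd (zmodPowersHom_mem_zpowers y _ m)
    · obtain ⟨k, hk⟩ := mem_zpowers_iff.1 (zmodPowersHom_mem_zpowers y (h4 y) m)
      exact hk ▸ hdy.zpow_right k
  · right
    rcases hsq with h | h
    · exact Or.inl <| nonempty_mulEquiv_of_injective _
        (DihedralGroup.lift_injective (h4 y) h hc hy hx) (by rw [DihedralGroup.nat_card, hcard])
    · exact Or.inr <| nonempty_mulEquiv_of_injective _
        (QuaternionGroup.lift_injective (n := 2) (h4 y) h hc hy hx)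
        (by rw [Nat.card_eq_fintype_card, QuaternionGroup.card, hcard])

theorem nonempty_mulEquiv_of_card_eq_eight [Finite G] (hcard : Nat.card G = 8) :
    Nonempty (G ≃* Multiplicative (ZMod 8)) ∨
      Nonempty (G ≃* Multiplicative (ZMod 2) × Multiplicative (ZMod 4)) ∨
      Nonempty (G ≃* Multiplicative (ZMod 2) × DihedralGroup 2) ∨
      Nonempty (G ≃* DihedralGroup 4) ∨ Nonempty (G ≃* QuaternionGroup 2) := by
  by_cases h8 : ∃ g : G, orderOf g = 8
  · obtain ⟨g, hg⟩ := h8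
    have : IsCyclic G := isCyclic_of_orderOf_eq_card g (hg.trans hcard.symm)
    exact Or.inl ⟨mulEquivOfCyclicCardEq (by simp [hcard])⟩
  push Not at h8
  have h4 := pow_four_eq_one_of_card_eq_eight hcard h8
  by_cases h2 : ∀ g : G, g ^ 2 = 1
  · exact Or.inr <| Or.inr <| Or.inl <| nonempty_mulEquiv_of_sq_eq_one hcard h2
  push Not at h2
  obtain ⟨y, hy⟩ := h2
  have hy4 : orderOf y = 4 := orderOf_eq_prime_pow (p := 2) (n := 1) (by simpa using hy) (h4 y)
  rcases nonempty_mulEquiv_of_orderOf_eq_four hcard h4 hy4 with h | h | h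
  · exact Or.inr <| Or.inl h
  · exact Or.inr <| Or.inr <| Or.inr <| Or.inl h
  · exact Or.inr <| Or.inr <| Or.inr <| Or.inr h

end Classification

namespace QD16

def X : QD16 := PresentedGroup.of true

def Y : QD16 := PresentedGroup.of false

lemma X_sq : X ^ 2 = 1 := by
  have := PresentedGroup.one_of_mem (rels := qdRels) (Set.mem_insert _ _)
  rwa [map_pow] at this

lemma Y_pow_eight : Y ^ 8 = 1 := by
  have := PresentedGroup.one_of_mem (rels := qdRels) (x := FreeGroup.of false ^ 8)
    (by simp [qdRels])
  rwa [map_pow] at this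

lemma X_mul_Y_mul_X : X * Y * X = Y ^ 3 := by
  have := PresentedGroup.one_of_mem (rels := qdRels) (x := FreeGroup.of true * FreeGroup.of false *
    FreeGroup.of true * (FreeGroup.of false ^ 3)⁻¹) (by simp [qdRels])
  rwa [map_mul, map_inv, mul_inv_eq_one, map_pow, map_mul, map_mul] at this

def genPerm : Bool → Equiv.Perm (ZMod 8)
  | true => Function.Involutive.toPerm (3 * ·) (by decide : ∀ k : ZMod 8, 3 * (3 * k) = k)
  | false => Equiv.addRight 1

def toPerm : QD16 →* Equiv.Perm (ZMod 8) :=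
  PresentedGroup.toGroup (f := genPerm) <| by
    rintro r (rfl | rfl | rfl) <;>
      simp only [map_pow, map_mul, map_inv, FreeGroup.lift_apply_of] <;> decide

lemma toPerm_Y : toPerm Y = Equiv.addRight 1 := PresentedGroup.toGroup.of _

lemma Y_pow_four_ne_one : Y ^ 4 ≠ 1 := fun h => by
  have := congrArg toPerm h
  rw [map_pow, map_one, toPerm_Y] at this
  exact absurd this (by decide)

lemma orderOf_Y : orderOf Y = 8 :=
  orderOf_eq_prime_pow (p := 2) (n := 2) Y_pow_four_ne_one Y_pow_eight

lemma orderOf_Y_sq : orderOf (Y ^ 2) = 4 := by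
  rw [orderOf_pow' Y two_ne_zero, orderOf_Y]; rfl

lemma orderOf_Y_sq_sq : orderOf ((Y ^ 2) ^ 2) = 2 := by
  rw [orderOf_pow' _ two_ne_zero, orderOf_Y_sq]; rfl

lemma X_inv : X⁻¹ = X := inv_eq_of_mul_eq_one_left (by rw [← sq, X_sq])

lemma X_mul_Y_sq_mul_X_inv : X * Y ^ 2 * X⁻¹ = (Y ^ 2)⁻¹ := by
  rw [← conj_pow, X_inv, X_mul_Y_mul_X, eq_inv_iff_mul_eq_one, ← pow_mul, ← pow_add]
  exact Y_pow_eight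

lemma Y_sq_pow_four : (Y ^ 2) ^ 4 = 1 := by rw [← pow_mul]; exact Y_pow_eight

lemma X_notMem_zpowers_Y : X ∉ zpowers Y := fun h => by
  obtain ⟨k, hk⟩ := mem_zpowers_iff.1 h
  have hXY : Commute X Y := hk ▸ (Commute.refl Y).zpow_left k
  have hY : Y ^ 2 * Y = Y := by
    rw [← pow_succ, ← X_mul_Y_mul_X, hXY.eq, mul_assoc, ← sq, X_sq, mul_one]
  exact pow_ne_one_of_lt_orderOf two_ne_zero (by rw [orderOf_Y]; norm_num) (mul_eq_right.1 hY)

lemma X_notMem_zpowers_Y_sq : X ∉ zpowers (Y ^ 2) := fun h =>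
  X_notMem_zpowers_Y (zpowers_le.2 (pow_mem (mem_zpowers Y) 2) h)

lemma X_mul_Y_notMem_zpowers_Y_sq : X * Y ∉ zpowers (Y ^ 2) := fun h =>
  X_notMem_zpowers_Y <| (mul_mem_cancel_right (mem_zpowers Y)).1 <|
    zpowers_le.2 (pow_mem (mem_zpowers Y) 2) h

lemma exists_injective_hom_zmod_eight : ∃ f : Multiplicative (ZMod 8) →* QD16, Injective f :=
  ⟨_, zmodPowersHom_injective Y_pow_eight orderOf_Y⟩

lemma exists_injective_hom_zmod_four : ∃ f : Multiplicative (ZMod 4) →* QD16, Injective f :=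
  ⟨_, zmodPowersHom_injective Y_sq_pow_four orderOf_Y_sq⟩

lemma exists_injective_hom_dihedralGroup_two : ∃ f : DihedralGroup 2 →* QD16, Injective f :=
  ⟨_, DihedralGroup.lift_injective (by rw [← pow_mul]; exact Y_sq_pow_four) X_sq
    (by rw [← conj_pow, X_mul_Y_sq_mul_X_inv, inv_pow]) orderOf_Y_sq_sq
    fun h => X_notMem_zpowers_Y_sq (zpowers_le.2 (pow_mem (mem_zpowers _) 2) h)⟩

lemma exists_injective_hom_dihedralGroup_four : ∃ f : DihedralGroup 4 →* QD16, Injective f :=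
  ⟨_, DihedralGroup.lift_injective Y_sq_pow_four X_sq X_mul_Y_sq_mul_X_inv orderOf_Y_sq
    X_notMem_zpowers_Y_sq⟩

lemma exists_injective_hom_quaternionGroup_two : ∃ f : QuaternionGroup 2 →* QD16, Injective f :=
  ⟨_, QuaternionGroup.lift_injective (n := 2) Y_sq_pow_four
    (by rw [sq (X * Y), ← mul_assoc, X_mul_Y_mul_X, ← pow_succ, ← pow_mul])
    (by rw [← X_mul_Y_sq_mul_X_inv]; group) orderOf_Y_sq X_mul_Y_notMem_zpowers_Y_sq⟩

end QD16

/-- Every group of order 8 embeds into `C₂ × QD₁₆`. -/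
theorem stmt3 :
    ∀ (H : Type) [Group H] [Finite H], Nat.card H = 8 →
      ∃ f : H →* Multiplicative (ZMod 2) × QD16, Function.Injective f := by
  intro H _ _ hcard
  have of_qd16 {M : Type} [Group M] : (∃ f : M →* QD16, Injective f) → Nonempty (H ≃* M) →
      ∃ f : H →* Multiplicative (ZMod 2) × QD16, Injective f := by
    rintro ⟨f, hf⟩ ⟨e⟩
    exact ⟨((MonoidHom.inr _ _).comp f).comp e.toMonoidHom,
      ((Prod.mk_right_injective 1).comp hf).comp e.injective⟩
  have of_prod {M : Type} [Group M] : (∃ f : M →* QD16, Injective f) →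
      Nonempty (H ≃* Multiplicative (ZMod 2) × M) →
      ∃ f : H →* Multiplicative (ZMod 2) × QD16, Injective f := by
    rintro ⟨f, hf⟩ ⟨e⟩
    exact ⟨((MonoidHom.id _).prodMap f).comp e.toMonoidHom,
      (injective_id.prodMap hf).comp e.injective⟩
  rcases nonempty_mulEquiv_of_card_eq_eight hcard with e | e | e | e | e
  · exact of_qd16 QD16.exists_injective_hom_zmod_eight e
  · exact of_prod QD16.exists_injective_hom_zmod_four e
  · exact of_prod QD16.exists_injective_hom_dihedralGroup_two e
  · exact of_qd16 QD16.exists_injective_hom_dihedralGroup_four e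
  · exact of_qd16 QD16.exists_injective_hom_quaternionGroup_two e
end

section
/- Every group of order 12 embeds into S_3 × S_4. -/
/-!
Let `P` and `Q` be a Sylow `2`- and a Sylow `3`-subgroup of `H`, of orders `4` and `3`. The actions
of `H` on the `3` cosets of `P` and on the `4` cosets of `Q` have kernels contained in `P` and `Q`
respectively, and `P ⊓ Q = ⊥` since their orders are coprime; so the product action is faithful.
-/

open Equiv

variable {G : Type*} [Group G]

theorem Sylow.card_eq_pow_of_card_eq [Finite G] {p k m : ℕ} [Fact p.Prime] (P : Sylow p G)
    (hG : Nat.card G = p ^ k * m) (hm : ¬p ∣ m) : Nat.card P = p ^ k := by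
  have hm0 : m ≠ 0 := by rintro rfl; exact hm (dvd_zero p)
  rw [P.card_eq_multiplicity, hG, Nat.factorization_mul (pow_ne_zero k (Fact.out : p.Prime).ne_zero)
    hm0, Finsupp.add_apply, Nat.factorization_eq_zero_of_not_dvd hm, Nat.factorization_pow,
    Finsupp.smul_apply, smul_eq_mul, (Fact.out : p.Prime).factorization_self, mul_one, add_zero]

theorem Subgroup.index_eq_of_card_eq (K : Subgroup G) {k m : ℕ} (hk : 0 < k)
    (hG : Nat.card G = k * m) (hK : Nat.card K = k) : K.index = m := by
  have := K.card_mul_index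
  rw [hG, hK] at this
  exact Nat.eq_of_mul_eq_mul_left hk this

theorem Subgroup.exists_hom_perm_fin_ker_le (K : Subgroup G) [K.FiniteIndex] {n : ℕ}
    (hK : K.index = n) :
    ∃ f : G →* Perm (Fin n), f.ker ≤ K := by
  let e : G ⧸ K ≃ Fin n := Finite.equivFinOfCardEq hK
  refine ⟨(e.permCongrHom : Perm (G ⧸ K) →* Perm (Fin n)).comp (MulAction.toPermHom G (G ⧸ K)), ?_⟩
  rw [MonoidHom.ker_mulEquiv_comp, ← Subgroup.normalCore_eq_ker]
  exact K.normalCore_le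

theorem exists_injective_prod_perm_fin_of_disjoint {K L : Subgroup G} [K.FiniteIndex]
    [L.FiniteIndex] {m n : ℕ} (hK : K.index = m) (hL : L.index = n) (hKL : Disjoint K L) :
    ∃ f : G →* Perm (Fin m) × Perm (Fin n), Function.Injective f := by
  obtain ⟨f, hf⟩ := K.exists_hom_perm_fin_ker_le hK
  obtain ⟨g, hg⟩ := L.exists_hom_perm_fin_ker_le hL
  refine ⟨f.prod g, (MonoidHom.ker_eq_bot_iff _).mp ?_⟩
  rw [MonoidHom.ker_prod, ← disjoint_iff]
  exact hKL.mono hf hg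

/-- Every group of order 12 embeds into `S₃ × S₄`. -/
theorem stmt5 :
    ∀ (H : Type) [Group H] [Finite H], Nat.card H = 12 →
      ∃ f : H →* Equiv.Perm (Fin 3) × Equiv.Perm (Fin 4), Function.Injective f := by
  intro H _ _ hcard
  obtain ⟨P⟩ : Nonempty (Sylow 2 H) := inferInstance
  obtain ⟨Q⟩ : Nonempty (Sylow 3 H) := inferInstance
  have hP : Nat.card P = 4 := P.card_eq_pow_of_card_eq (k := 2) (m := 3) hcard (by norm_num)
  have hQ : Nat.card Q = 3 := Q.card_eq_pow_of_card_eq (k := 1) (m := 4) hcard (by norm_num)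
  exact exists_injective_prod_perm_fin_of_disjoint
    (P.index_eq_of_card_eq (by norm_num) hcard hP)
    (Q.index_eq_of_card_eq (by norm_num) hcard hQ)
    (Subgroup.disjoint_of_coprime_natCard (by rw [hP, hQ]; rfl))
end

section
/- Every group of order 12 embeds into C_2 × C_4 × S_4, a group of order 192. In particular, 144 (the minimal order of a group containing all groups of order 12) does not divide 192. -/
/-!
Let `P` be a subgroup of order 3 (index 4) of a group `H` of order 12. The action of `H` on
`H ⧸ P` is a map `H → S₄` whose kernel is the normal core of `P`, which is `⊥` or `P` itself.
In the first case `H` embeds into `S₄`. In the second, `P` is normal, `H ⧸ P` has order 4 and so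
embeds into `C₂ × C₄`, while the action on the cosets of a subgroup `Q` of order 4 gives a map
`H → S₃ ≤ S₄` with kernel inside `Q`; since `P ⊓ Q = ⊥`, the two maps together are injective.
-/

open Function

section Embeddings

variable {G : Type*} [Group G]

theorem MonoidHom.prod_injective_of_disjoint_ker {M N : Type*} [MulOneClass M] [MulOneClass N]
    {f : G →* M} {g : G →* N} (h : Disjoint f.ker g.ker) : Injective (f.prod g) := by
  rw [← MonoidHom.ker_eq_bot_iff, MonoidHom.ker_prod]
  exact h.eq_bot

theorem Subgroup.eq_bot_or_eq_of_le_of_prime_card {L P : Subgroup G} (hLP : L ≤ P)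
    (hP : (Nat.card P).Prime) : L = ⊥ ∨ L = P := by
  have : Finite P := Nat.finite_of_card_ne_zero hP.ne_zero
  rcases (Nat.dvd_prime hP).mp (Subgroup.card_dvd_of_le hLP) with h | h
  · exact .inl (Subgroup.eq_bot_iff_card L |>.mpr h)
  · exact .inr (Subgroup.eq_of_le_of_card_ge hLP h.ge)

theorem Subgroup.exists_monoidHom_perm_fin_ker_eq_normalCore (K : Subgroup G) [K.FiniteIndex]
    {n : ℕ} (hK : K.index ≤ n) : ∃ φ : G →* Equiv.Perm (Fin n), φ.ker = K.normalCore := by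
  let e : G ⧸ K ↪ Fin n := (Finite.equivFin (G ⧸ K)).toEmbedding.trans (Fin.castLEEmb hK)
  refine ⟨(Equiv.Perm.viaEmbeddingHom e).comp (MulAction.toPermHom G (G ⧸ K)), ?_⟩
  rw [MonoidHom.ker_comp_of_injective _ _ (Equiv.Perm.viaEmbeddingHom_injective e),
    Subgroup.normalCore_eq_ker]

theorem exists_injective_perm_fin_of_normalCore_eq_bot {K : Subgroup G} [K.FiniteIndex]
    {n : ℕ} (hK : K.index ≤ n) (hcore : K.normalCore = ⊥) :
    ∃ φ : G →* Equiv.Perm (Fin n), Injective φ := by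
  obtain ⟨φ, hφ⟩ := K.exists_monoidHom_perm_fin_ker_eq_normalCore hK
  exact ⟨φ, φ.ker_eq_bot_iff.mp (hφ.trans hcore)⟩

theorem exists_injective_prod_perm_fin_of_disjoint_s8 {A : Type*} [Group A] {N K : Subgroup G}
    [N.Normal] [K.FiniteIndex] (hNK : Disjoint N K) {n : ℕ} (hK : K.index ≤ n)
    {f : G ⧸ N →* A} (hf : Injective f) : ∃ φ : G →* A × Equiv.Perm (Fin n), Injective φ := by
  obtain ⟨ψ, hψ⟩ := K.exists_monoidHom_perm_fin_ker_eq_normalCore hK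
  refine ⟨(f.comp (QuotientGroup.mk' N)).prod ψ, MonoidHom.prod_injective_of_disjoint_ker ?_⟩
  rw [MonoidHom.ker_comp_of_injective _ _ hf, QuotientGroup.ker_mk', hψ]
  exact hNK.mono_right K.normalCore_le

end Embeddings

def ZMod.doubleHom : ZMod 2 →+ ZMod 4 := AddMonoidHom.mk' (fun x => 2 * x.val) (by decide)

theorem ZMod.doubleHom_injective : Injective ZMod.doubleHom := by decide

theorem exists_injective_of_card_eq_four (K : Type*) [Group K] (hK : Nat.card K = 4) :
    ∃ f : K →* Multiplicative (ZMod 2) × Multiplicative (ZMod 4), Injective f := by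
  by_cases hcyc : IsCyclic K
  · let e : K ≃* Multiplicative (ZMod 4) := mulEquivOfCyclicCardEq (hK.trans (Nat.card_zmod 4).symm)
    exact ⟨(MonoidHom.inr _ _).comp e, fun a b h => e.injective (congrArg Prod.snd h)⟩
  · have : IsKleinFour K :=
      ⟨hK, (not_isCyclic_iff_exponent_eq_prime Nat.prime_two hK).mp hcyc⟩
    obtain ⟨e⟩ : Nonempty (K ≃* Multiplicative (ZMod 2 × ZMod 2)) :=
      IsKleinFour.nonempty_mulEquiv
    let d : ZMod 2 × ZMod 2 →+ ZMod 2 × ZMod 4 := (AddMonoidHom.id _).prodMap ZMod.doubleHom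
    have hd : Injective d := Prod.map_injective.mpr ⟨injective_id, ZMod.doubleHom_injective⟩
    exact ⟨(MulEquiv.prodMultiplicative _ _).toMonoidHom.comp
      ((AddMonoidHom.toMultiplicative d).comp e),
      fun a b h => e.injective (hd ((MulEquiv.prodMultiplicative _ _).injective h))⟩

theorem exists_injective_of_card_eq_twelve (H : Type*) [Group H] (hH : Nat.card H = 12) :
    ∃ f : H →* Multiplicative (ZMod 2) × Multiplicative (ZMod 4) × Equiv.Perm (Fin 4),
      Injective f := by
  have : Finite H := Nat.finite_of_card_ne_zero (by omega)
  have : Fact (Nat.Prime 3) := ⟨Nat.prime_three⟩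
  have : Fact (Nat.Prime 2) := ⟨Nat.prime_two⟩
  obtain ⟨P, hP⟩ := Sylow.exists_subgroup_card_pow_prime 3 (n := 1) (by rw [hH]; norm_num)
  obtain ⟨Q, hQ⟩ := Sylow.exists_subgroup_card_pow_prime 2 (n := 2) (by rw [hH]; norm_num)
  have hPi : P.index = 4 := by have := P.index_mul_card; rw [hP, hH] at this; omega
  have hQi : Q.index = 3 := by have := Q.index_mul_card; rw [hQ, hH] at this; omega
  rcases Subgroup.eq_bot_or_eq_of_le_of_prime_card P.normalCore_le (by rw [hP]; norm_num)
    with hcore | hcore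
  · obtain ⟨φ, hφ⟩ := exists_injective_perm_fin_of_normalCore_eq_bot hPi.le hcore
    exact ⟨(MonoidHom.inr _ _).comp ((MonoidHom.inr _ _).comp φ),
      fun a b h => hφ (congrArg (·.2.2) h)⟩
  · have : P.Normal := hcore ▸ P.normalCore_normal
    obtain ⟨f, hf⟩ := exists_injective_of_card_eq_four (H ⧸ P) hPi
    have hPQ : Disjoint P Q := Subgroup.disjoint_of_coprime_natCard (by rw [hP, hQ]; norm_num)
    obtain ⟨φ, hφ⟩ := exists_injective_prod_perm_fin_of_disjoint_s8 hPQ (n := 4) (by omega) hf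
    exact ⟨MulEquiv.prodAssoc.toMonoidHom.comp φ, (MulEquiv.injective _).comp hφ⟩

/-- Every group of order 12 embeds into `C₂ × C₄ × S₄`, a group of order 192;
moreover 144 does not divide 192. -/
theorem stmt8 :
    (∀ (H : Type) [Group H] [Finite H], Nat.card H = 12 →
      ∃ f : H →* Multiplicative (ZMod 2) × Multiplicative (ZMod 4) × Equiv.Perm (Fin 4),
        Function.Injective f) ∧
    Nat.card (Multiplicative (ZMod 2) × Multiplicative (ZMod 4) × Equiv.Perm (Fin 4))
      = 192 ∧
    ¬ (144 ∣ 192) := by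
  refine ⟨fun H _ _ hH => exists_injective_of_card_eq_twelve H hH, ?_, by norm_num⟩
  simp [Fintype.card_perm, Nat.factorial]
end

section
/- Let A and B be subgroups of a group G such that B centralizes the commutator subgroup [A,B] and [A,B] is abelian. Then the derived subgroup B' centralizes A. -/
/-!
Fix `a ∈ A`. Since `B` centralizes `[A, B]`, the identity `⁅a, xy⁆ = ⁅a, x⁆ · x⁅a, y⁆x⁻¹`
makes `x ↦ ⁅a, x⁆` a homomorphism from `B` into the abelian group `[A, B]`. A homomorphism
into an abelian group kills commutators, so `⁅a, ⁅x, y⁆⁆ = 1` for all `x, y ∈ B`, i.e. every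
generator of `B'` commutes with `a`.
-/

open scoped commutatorElement

section

variable {G : Type*} [Group G]

theorem commutatorElement_mul_right_of_commute {a x y : G} (h : Commute x ⁅a, y⁆) :
    ⁅a, x * y⁆ = ⁅a, x⁆ * ⁅a, y⁆ := by
  rw [commutatorElement_mul_right_eq_mul_conj, mul_assoc _ x, h.eq, mul_assoc,
    mul_inv_cancel_right]

def Subgroup.commutatorElementLeftHom (a : G) (B : Subgroup G)
    (hB : ∀ x ∈ B, ∀ y ∈ B, Commute x ⁅a, y⁆) : B →* G :=
  MonoidHom.mk' (fun x => ⁅a, (x : G)⁆) fun x y =>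
    commutatorElement_mul_right_of_commute (hB x x.2 y y.2)

theorem commutatorElement_commutatorElement_eq_one {a : G} {B : Subgroup G}
    (hB : ∀ x ∈ B, ∀ y ∈ B, Commute x ⁅a, y⁆) (hcomm : ∀ x ∈ B, ∀ y ∈ B, Commute ⁅a, x⁆ ⁅a, y⁆)
    {x y : G} (hx : x ∈ B) (hy : y ∈ B) : ⁅a, ⁅x, y⁆⁆ = 1 := by
  have := map_commutatorElement (B.commutatorElementLeftHom a hB) ⟨x, hx⟩ ⟨y, hy⟩
  exact this.trans (hcomm x hx y hy).commutator_eq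

theorem Subgroup.commutator_le_centralizer_of_commute {A B : Subgroup G}
    (hB : ∀ b ∈ B, ∀ c ∈ ⁅A, B⁆, Commute b c) (hAB : ∀ c ∈ ⁅A, B⁆, ∀ d ∈ ⁅A, B⁆, Commute c d) :
    ⁅B, B⁆ ≤ centralizer (A : Set G) := by
  rw [commutator_le]
  intro x hx y hy a ha
  have hmem {z} (hz : z ∈ B) : ⁅a, z⁆ ∈ ⁅A, B⁆ := commutator_mem_commutator ha hz
  exact commutatorElement_eq_one_iff_mul_comm.mp <| commutatorElement_commutatorElement_eq_one
    (fun x hx y hy => hB x hx _ (hmem hy)) (fun x hx y hy => hAB _ (hmem hx) _ (hmem hy)) hx hy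

end

/-- If `B` centralizes `[A, B]` and `[A, B]` is abelian, then `B'` centralizes `A`. -/
theorem stmt15 (G : Type*) [Group G] (A B : Subgroup G)
    (h1 : ∀ b ∈ B, ∀ c ∈ ⁅A, B⁆, b * c = c * b)
    (h2 : ∀ c ∈ ⁅A, B⁆, ∀ d ∈ ⁅A, B⁆, c * d = d * c) :
    ∀ b ∈ ⁅B, B⁆, ∀ a ∈ A, b * a = a * b := fun _ hb a ha =>
  (Subgroup.commutator_le_centralizer_of_commute h1 h2 hb a ha).symm
end

section
/- Let H be a group of order 16 with H = D⟨y⟩ where D ≅ D_8 (dihedral of order 8), y has order 2, D ∩ ⟨y⟩ = 1, and C_H(D) = Z(D). Then H has a unique cyclic subgroup of order 4; in particular the quaternion group Q_8 does not embed into H. -/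
/-!
Conjugation by `y` restricts to an automorphism `σ` of `D ≅ D₈`, and `σ` is not inner because
`C_H(D) ≤ D`. The outer automorphisms of `D₈` send the reflection `s` to a reflection of the other
conjugacy class, so `σ(s) s` is a rotation of order 4. Hence `t = y s` has `t² = σ(s) s` of order 4,
so `t` has order 8, and the involution `s` inverts `t`: `H` is dihedral of order 16. Every element
outside `⟨t⟩` is then an involution, so every cyclic subgroup of order 4 lies in `⟨t⟩`, where it
must be `⟨t²⟩`. Since `Q₈` has two distinct cyclic subgroups of order 4, it does not embed in `H`.
-/

open Subgroup

namespace DihedralGroup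

def ofGens {G : Type*} [Monoid G] {n : ℕ} (B S : G) : DihedralGroup n → G
  | r j => B ^ j.val
  | sr j => S * B ^ j.val

theorem eq_ofGens {G : Type*} [Monoid G] {n : ℕ} [NeZero n] (f : DihedralGroup n →* G)
    (g : DihedralGroup n) : f g = ofGens (f (r 1)) (f (sr 0)) g := by
  have hr : ∀ j : ZMod n, r j = r 1 ^ j.val := fun j => by
    rw [r_one_pow, ZMod.natCast_zmod_val]
  cases g with
  | r j => rw [ofGens, hr, map_pow]
  | sr j => rw [ofGens, ← map_pow, ← hr, ← map_mul, sr_mul_r, zero_add]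

set_option maxRecDepth 100000 in
theorem four_isInner_or_orderOf_mul_sr_zero (σ : MulAut (DihedralGroup 4)) :
    (∃ d, ∀ g, σ g = d * g * d⁻¹) ∨ orderOf (σ (sr 0) * sr 0) = 4 := by
  -- An automorphism is determined by the images `B`, `S` of `r 1`, `sr 0`: a check of 64 pairs.
  have hcheck : ∀ B S : DihedralGroup 4, Function.Injective (ofGens (n := 4) B S) →
      (∃ d, ∀ g, ofGens (n := 4) B S g = d * g * d⁻¹) ∨ S = sr 1 ∨ S = sr 3 := by
    decide
  have hσ : ⇑σ = ofGens (σ (r 1)) (σ (sr 0)) := funext (eq_ofGens σ.toMonoidHom)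
  rcases hcheck _ _ (hσ ▸ σ.injective) with hinner | h | h
  · exact Or.inl (hσ ▸ hinner)
  all_goals
    right
    rw [h, sr_mul_sr, orderOf_r]
    decide

end DihedralGroup

theorem not_forall_conj_eq_conj_of_centralizer_le {G : Type*} [Group G] {D : Subgroup G}
    (hc : centralizer (D : Set G) ≤ D) {y d : G} (hy : y ∉ D) (hd : d ∈ D) :
    ¬ ∀ h ∈ D, y * h * y⁻¹ = d * h * d⁻¹ := by
  intro hconj
  have hcomm : d⁻¹ * y ∈ centralizer (D : Set G) := by
    rw [mem_centralizer_iff]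
    intro h hh
    calc h * (d⁻¹ * y) = d⁻¹ * (d * h * d⁻¹) * y := by group
      _ = d⁻¹ * (y * h * y⁻¹) * y := by rw [hconj h hh]
      _ = d⁻¹ * y * h := by group
  exact hy (by simpa using mul_mem hd (hc hcomm))

section DihedralType

variable {G : Type*} [Group G] {t a g : G}

theorem mem_zpowers_pow_of_pow_eq_one {n : ℕ} (hn : 0 < n) (hnt : n ∣ orderOf t)
    (hg : g ∈ zpowers t) (hgn : g ^ n = 1) : g ∈ zpowers (t ^ (orderOf t / n)) := by
  obtain ⟨k, rfl⟩ := mem_zpowers_iff.mp hg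
  obtain ⟨m, hm⟩ := hnt
  have hdvd : (orderOf t : ℤ) ∣ k * n :=
    orderOf_dvd_iff_zpow_eq_one.mpr (by rw [zpow_mul, zpow_natCast, hgn])
  rw [hm, Nat.cast_mul, mul_comm] at hdvd
  obtain ⟨j, rfl⟩ := Int.dvd_of_mul_dvd_mul_right (by exact_mod_cast hn.ne') hdvd
  rw [hm, Nat.mul_div_cancel_left _ hn, zpow_mul, ← zpow_natCast]
  exact zpow_mem_zpowers _ _

theorem notMem_zpowers_of_mul_mul_inv_eq_inv (hat : a * t * a⁻¹ = t⁻¹) (ht : t ^ 2 ≠ 1) :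
    a ∉ zpowers t := by
  rintro ⟨k, rfl⟩
  apply ht
  have hcomm : t ^ k * t * (t ^ k)⁻¹ = t := by group
  rw [hcomm] at hat
  rw [sq]
  nth_rw 2 [hat]
  exact mul_inv_cancel t

theorem mem_zpowers_of_sq_ne_one (hidx : (zpowers t).index = 2) (ha : a ∉ zpowers t)
    (ha2 : a ^ 2 = 1) (hat : a * t * a⁻¹ = t⁻¹) (hg : g ^ 2 ≠ 1) : g ∈ zpowers t := by
  by_contra hgt
  obtain ⟨k, hk⟩ :=
    mem_zpowers_iff.mp ((mul_mem_iff_of_index_two hidx).mpr (iff_of_false hgt ha))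
  apply hg
  have ha' : a⁻¹ = a := inv_eq_of_mul_eq_one_right (by rw [← sq, ha2])
  have hconj : a * t ^ k * a⁻¹ = t ^ (-k) := by rw [← conj_zpow, hat, inv_zpow']
  have hg' : g = t ^ k * a := by rw [hk, mul_assoc, ← sq, ha2, mul_one]
  calc g ^ 2 = t ^ k * (a * t ^ k * a⁻¹) := by rw [hg', ha', sq]; simp only [mul_assoc]
    _ = 1 := by rw [hconj]; group

theorem existsUnique_isCyclic_card (hidx : (zpowers t).index = 2) (ha : a ∉ zpowers t)
    (ha2 : a ^ 2 = 1) (hat : a * t * a⁻¹ = t⁻¹) {n : ℕ} (hn : 2 < n) (hnt : n ∣ orderOf t)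
    (ht : orderOf t ≠ 0) : ∃! C : Subgroup G, IsCyclic C ∧ Nat.card C = n := by
  have hcard : Nat.card (zpowers (t ^ (orderOf t / n))) = n := by
    rw [Nat.card_zpowers, orderOf_pow_orderOf_div ht hnt]
  refine ⟨zpowers (t ^ (orderOf t / n)), ⟨inferInstance, hcard⟩, ?_⟩
  rintro C ⟨hC, hCn⟩
  obtain ⟨g, rfl⟩ := (C.isCyclic_iff_exists_zpowers_eq_top).mp hC
  rw [Nat.card_zpowers] at hCn
  have hg2 : g ^ 2 ≠ 1 := pow_ne_one_of_lt_orderOf two_ne_zero (hCn ▸ hn)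
  have hgn : g ^ n = 1 := hCn ▸ pow_orderOf_eq_one g
  have hgt := mem_zpowers_of_sq_ne_one hidx ha ha2 hat hg2
  have : Finite (zpowers (t ^ (orderOf t / n))) := Nat.finite_of_card_ne_zero (by omega)
  refine eq_of_le_of_card_ge (zpowers_le_of_mem ?_) (by rw [hcard, Nat.card_zpowers, hCn])
  exact mem_zpowers_pow_of_pow_eq_one (by omega) hnt hgt hgn

end DihedralType

theorem not_exists_injective_quaternionGroup_two {G : Type*} [Group G]
    (h : ∃! C : Subgroup G, IsCyclic C ∧ Nat.card C = 4) :
    ¬ ∃ f : QuaternionGroup 2 →* G, Function.Injective f := by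
  rintro ⟨f, hf⟩
  have hcyc (q : QuaternionGroup 2) (hq : orderOf q = 4) :
      IsCyclic (zpowers (f q)) ∧ Nat.card (zpowers (f q)) = 4 :=
    ⟨inferInstance, by rw [Nat.card_zpowers, orderOf_injective f hf, hq]⟩
  have heq :=
    h.unique (hcyc _ QuaternionGroup.orderOf_a_one) (hcyc _ (QuaternionGroup.orderOf_xa 0))
  obtain ⟨k, hk⟩ := mem_zpowers_iff.mp (heq ▸ mem_zpowers (f (.xa 0)))
  have hcomm : QuaternionGroup.a 1 * .xa 0 = .xa 0 * (QuaternionGroup.a 1 : QuaternionGroup 2) :=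
    hf (by rw [map_mul, map_mul, ← hk, ← zpow_one_add, ← zpow_add_one, add_comm])
  exact absurd hcomm (by decide)

theorem exists_orderOf_eq_eight_of_dihedralGroup_four {H : Type*} [Group H] {D : Subgroup H}
    [D.Normal] (e : D ≃* DihedralGroup 4) (hc : centralizer (D : Set H) ≤ D) {y : H}
    (hy2 : y ^ 2 = 1) (hyD : y ∉ D) :
    ∃ t a : H, orderOf t = 8 ∧ a ^ 2 = 1 ∧ a * t * a⁻¹ = t⁻¹ := by
  let σ : MulAut (DihedralGroup 4) := e.symm.trans ((MulAut.conjNormal y).trans e)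
  have hσ (g : DihedralGroup 4) : (e.symm (σ g) : H) = y * e.symm g * y⁻¹ := by simp [σ]
  rcases DihedralGroup.four_isInner_or_orderOf_mul_sr_zero σ with ⟨d, hd⟩ | hσs
  · refine absurd ?_ (not_forall_conj_eq_conj_of_centralizer_le hc hyD (e.symm d).2)
    intro h hh
    obtain ⟨g, rfl⟩ : ∃ g, (e.symm g : H) = h := ⟨e ⟨h, hh⟩, by simp⟩
    rw [← hσ, hd]
    simp
  set a : H := ((e.symm (DihedralGroup.sr 0) : D) : H)
  have hy' : y⁻¹ = y := inv_eq_of_mul_eq_one_right (by rw [← sq, hy2])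
  have ha2 : a ^ 2 = 1 := by
    rw [← coe_pow, ← map_pow, sq, DihedralGroup.sr_mul_self, map_one, coe_one]
  have ha' : a⁻¹ = a := inv_eq_of_mul_eq_one_right (by rw [← sq, ha2])
  have hsq : (y * a) ^ 2 = e.symm (σ (DihedralGroup.sr 0) * DihedralGroup.sr 0) := by
    rw [map_mul, coe_mul, hσ, sq, hy']
    simp only [a, mul_assoc]
  have hsq4 : orderOf ((y * a) ^ 2) = 4 := by
    rw [hsq, Subgroup.orderOf_coe, MulEquiv.orderOf_eq, hσs]
  refine ⟨y * a, a, ?_, ha2, ?_⟩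
  · refine orderOf_eq_prime_pow (p := 2) (n := 2) ?_ ?_
    · rw [show 2 ^ 2 = 2 * 2 by rfl, pow_mul]
      exact pow_ne_one_of_lt_orderOf two_ne_zero (by omega)
    · rw [show 2 ^ (2 + 1) = 2 * 4 by rfl, pow_mul, ← hsq4, pow_orderOf_eq_one]
  · calc a * (y * a) * a⁻¹ = a * y := by group
      _ = (y * a)⁻¹ := by rw [mul_inv_rev, hy', ha']

theorem stmt17_general (H : Type*) [Group H] (hH : Nat.card H = 16)
    (D : Subgroup H) (y : H)
    (hD : Nonempty (D ≃* DihedralGroup 4))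
    (hy : orderOf y = 2)
    (hint : D ⊓ Subgroup.zpowers y = ⊥)
    (hcent : Subgroup.centralizer (D : Set H) = D ⊓ Subgroup.centralizer (D : Set H)) :
    (∃! C : Subgroup H, IsCyclic C ∧ Nat.card C = 4) ∧
    ¬ ∃ f : QuaternionGroup 2 →* H, Function.Injective f := by
  obtain ⟨e⟩ := hD
  have hDidx : D.index = 2 := by
    have := D.card_mul_index
    rw [Nat.card_congr e.toEquiv, DihedralGroup.nat_card, hH] at this
    omega
  have := normal_of_index_eq_two hDidx
  have hyD : y ∉ D := fun hyD => by
    have : y ∈ D ⊓ zpowers y := ⟨hyD, mem_zpowers y⟩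
    rw [hint, mem_bot] at this
    simp [this] at hy
  have hc : centralizer (D : Set H) ≤ D := hcent ▸ inf_le_left
  obtain ⟨t, a, ht, ha2, hat⟩ :=
    exists_orderOf_eq_eight_of_dihedralGroup_four e hc (hy ▸ pow_orderOf_eq_one y) hyD
  have hidx : (zpowers t).index = 2 := by
    have := (zpowers t).card_mul_index
    rw [Nat.card_zpowers, ht, hH] at this
    omega
  have ha := notMem_zpowers_of_mul_mul_inv_eq_inv hat
    (pow_ne_one_of_lt_orderOf two_ne_zero (by omega))
  have hunique := existsUnique_isCyclic_card hidx ha ha2 hat (n := 4) (by norm_num)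
    (by rw [ht]; norm_num) (by omega)
  exact ⟨hunique, not_exists_injective_quaternionGroup_two hunique⟩

/-- Let `H` be a group of order 16 with `H = D⟨y⟩`, where `D ≅ D₈` (dihedral of order 8),
`y` has order 2, `D ∩ ⟨y⟩ = 1` and `C_H(D) = Z(D)`.  Then `H` has a unique cyclic
subgroup of order 4; in particular `Q₈` does not embed into `H`. -/
theorem stmt17 (H : Type*) [Group H] (hH : Nat.card H = 16)
    (D : Subgroup H) (y : H)
    (hD : Nonempty (D ≃* DihedralGroup 4))
    (hy : orderOf y = 2)
    (hgen : D ⊔ Subgroup.zpowers y = ⊤)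
    (hint : D ⊓ Subgroup.zpowers y = ⊥)
    (hcent : Subgroup.centralizer (D : Set H) = D ⊓ Subgroup.centralizer (D : Set H)) :
    (∃! C : Subgroup H, IsCyclic C ∧ Nat.card C = 4) ∧
    ¬ ∃ f : QuaternionGroup 2 →* H, Function.Injective f :=
  stmt17_general H hH D y hD hy hint hcent
end

section
/- Let G be a group of order 32 with G = (D × ⟨x⟩)⟨y⟩ where ⟨x⟩ ⊴ G has order 2, D ≅ D_8, and y^2 ∈ ⟨x⟩. If Q_8 embeds into G, then G has exponent 4; in particular C_8 does not embed into G. -/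
/-!
A normal subgroup `⟨x⟩` of order 2 is central, so `H = D × ⟨x⟩` and `K = Q × ⟨x⟩`, with `Q` the
image of `Q₈`, are subgroups of order 16 and exponent 4. Every square in `H` is 1 or the central
involution `z` of `D`, hence `z` is also the involution of `Q`; and `Q₈` does not embed into
`D₈ × C₂`, so `H ≠ K`. If some `u` had `u⁴ ≠ 1`, then `u ∉ H ∪ K`, `u⁴ = z`, and
`H ∩ K = ⟨u²⟩ × ⟨x⟩` centralises `u`, so every `t ∉ H ∪ K` has `t⁴ = z`. Now `y ∉ H` and
`y⁴ = 1`, so `y ∈ K`, which forces `y² = z ∉ ⟨x⟩`.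
-/

open Subgroup

section CentralInvolution

variable {G : Type*} [Group G] {x : G}

lemma mem_zpowers_iff_of_orderOf_eq_two (hx : orderOf x = 2) {w : G} :
    w ∈ zpowers x ↔ w = 1 ∨ w = x := by
  refine ⟨?_, by rintro (rfl | rfl) <;> simp [mem_zpowers]⟩
  rintro ⟨k, rfl⟩
  change x ^ k = 1 ∨ x ^ k = x
  rw [← zpow_mod_orderOf, hx]
  rcases Int.emod_two_eq_zero_or_one k with h | h <;> simp [h]

lemma mem_center_of_zpowers_normal (hn : (zpowers x).Normal) (hx : orderOf x = 2) :
    x ∈ center G := by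
  refine mem_center_iff.mpr fun g => ?_
  rcases (mem_zpowers_iff_of_orderOf_eq_two hx).mp (hn.conj_mem x (mem_zpowers x) g) with h | h
  · simp [conj_eq_one_iff.mp h] at hx
  · exact mul_inv_eq_iff_eq_mul.mp h

lemma commute_of_mem_zpowers (hxc : x ∈ center G) (g : G) {w : G} (hw : w ∈ zpowers x) :
    Commute g w :=
  mem_center_iff.mp (zpowers_le.mpr hxc hw) g

lemma sq_mul_of_mem_zpowers (hx : orderOf x = 2) (hxc : x ∈ center G) (g : G) {w : G}
    (hw : w ∈ zpowers x) : (g * w) ^ 2 = g ^ 2 := by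
  rw [(commute_of_mem_zpowers hxc g hw).mul_pow]
  rcases (mem_zpowers_iff_of_orderOf_eq_two hx).mp hw with rfl | rfl
  · rw [one_pow, mul_one]
  · rw [← hx, pow_orderOf_eq_one, mul_one]

variable {A : Type*} [Group A] (φ : A →* G)

def prodZPowersHom (hxc : x ∈ center G) : A × zpowers x →* G :=
  φ.noncommCoprod (zpowers x).subtype fun a w => commute_of_mem_zpowers hxc (φ a) w.2

lemma range_prodZPowersHom (hxc : x ∈ center G) :
    (prodZPowersHom φ hxc).range = φ.range ⊔ zpowers x := by
  rw [prodZPowersHom, MonoidHom.noncommCoprod_range, range_subtype]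

lemma prodZPowersHom_injective (hxc : x ∈ center G) (hφ : Function.Injective φ)
    (hx : orderOf x = 2) (hxφ : x ∉ φ.range) : Function.Injective (prodZPowersHom φ hxc) := by
  refine (MonoidHom.noncommCoprod_injective _ _ _).mpr ⟨hφ, subtype_injective _, ?_⟩
  rw [range_subtype, disjoint_iff_inf_le]
  rintro w ⟨hwφ, hwx⟩
  rcases (mem_zpowers_iff_of_orderOf_eq_two hx).mp hwx with rfl | rfl
  · exact one_mem _
  · exact absurd hwφ hxφ

lemma card_range_sup_zpowers (hxc : x ∈ center G) (hφ : Function.Injective φ)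
    (hx : orderOf x = 2) (hxφ : x ∉ φ.range) :
    Nat.card (φ.range ⊔ zpowers x : Subgroup G) = Nat.card A * 2 := by
  rw [← range_prodZPowersHom φ hxc, ← Nat.card_congr
    (MonoidHom.ofInjective (prodZPowersHom_injective φ hxc hφ hx hxφ)).toEquiv,
    Nat.card_prod, Nat.card_zpowers, hx]

lemma exists_eq_mul_of_mem_range_sup_zpowers (hxc : x ∈ center G) {g : G}
    (hg : g ∈ φ.range ⊔ zpowers x) : ∃ a, ∃ w ∈ zpowers x, g = φ a * w := by
  rw [← range_prodZPowersHom φ hxc] at hg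
  obtain ⟨⟨a, w⟩, rfl⟩ := hg
  exact ⟨a, w, w.2, rfl⟩

lemma exists_sq_eq_of_mem_range_sup_zpowers (hxc : x ∈ center G) (hx : orderOf x = 2) {g : G}
    (hg : g ∈ φ.range ⊔ zpowers x) : ∃ a, g ^ 2 = φ (a ^ 2) := by
  obtain ⟨a, w, hw, rfl⟩ := exists_eq_mul_of_mem_range_sup_zpowers φ hxc hg
  exact ⟨a, by rw [sq_mul_of_mem_zpowers hx hxc _ hw, map_pow]⟩

lemma pow_four_eq_one_of_mem_range_sup_zpowers (hxc : x ∈ center G) (hx : orderOf x = 2)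
    (hA : ∀ a : A, a ^ 4 = 1) {g : G} (hg : g ∈ φ.range ⊔ zpowers x) : g ^ 4 = 1 := by
  obtain ⟨a, ha⟩ := exists_sq_eq_of_mem_range_sup_zpowers φ hxc hx hg
  rw [show g ^ 4 = (g ^ 2) ^ 2 by rw [← pow_mul], ha, ← map_pow, ← pow_mul, hA, map_one]

lemma index_range_sup_zpowers [Finite A] (hxc : x ∈ center G) (hφ : Function.Injective φ)
    (hx : orderOf x = 2) (hxφ : x ∉ φ.range) (hG : Nat.card G = 4 * Nat.card A) :
    (φ.range ⊔ zpowers x).index = 2 := by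
  have h := (φ.range ⊔ zpowers x).index_mul_card
  rw [card_range_sup_zpowers φ hxc hφ hx hxφ, hG] at h
  have := Nat.card_pos (α := A)
  nlinarith

end CentralInvolution

namespace DihedralGroup

lemma sq_eq_one_or_eq_r_two : ∀ p : DihedralGroup 4, p ^ 2 = 1 ∨ p ^ 2 = r 2 := by
  decide

lemma pow_four_eq_one : ∀ p : DihedralGroup 4, p ^ 4 = 1 := by
  decide

lemma sq_eq_one_of_sq_eq_sq_of_conj_eq_inv :
    ∀ p q : DihedralGroup 4, p ^ 2 = q ^ 2 → q * p * q⁻¹ = p⁻¹ → p ^ 2 = 1 := by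
  decide

end DihedralGroup

namespace QuaternionGroup

lemma sq_eq_a_two_of_ne : ∀ v : QuaternionGroup 2, v ≠ 1 → v ≠ a 2 → v ^ 2 = a 2 := by
  decide

lemma pow_four_eq_one : ∀ v : QuaternionGroup 2, v ^ 4 = 1 := by
  decide

lemma not_injective_to_dihedral_prod {B : Type*} [Group B] (hB : ∀ b : B, b ^ 2 = 1)
    (φ : QuaternionGroup 2 →* DihedralGroup 4 × B) : ¬ Function.Injective φ := by
  intro hφ
  have hsq : (φ (a 1)).1 ^ 2 = (φ (xa 0)).1 ^ 2 := by
    simpa only [map_pow, Prod.pow_fst] using congrArg (fun v => (φ v).1)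
      (by decide : (a 1 : QuaternionGroup 2) ^ 2 = xa 0 ^ 2)
  have hconj : (φ (xa 0)).1 * (φ (a 1)).1 * (φ (xa 0)).1⁻¹ = (φ (a 1)).1⁻¹ := by
    simpa only [map_mul, map_inv, Prod.fst_mul, Prod.fst_inv] using congrArg (fun v => (φ v).1)
      (by decide : xa 0 * a 1 * (xa 0)⁻¹ = (a 1 : QuaternionGroup 2)⁻¹)
  have h1 : φ (a 1 ^ 2) = 1 := by
    rw [map_pow]
    exact Prod.ext
      (DihedralGroup.sq_eq_one_of_sq_eq_sq_of_conj_eq_inv _ _ hsq hconj) (hB _)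
  exact absurd (hφ (h1.trans (map_one φ).symm)) (by decide)

end QuaternionGroup

section

variable {G : Type*} [Group G]

lemma eq_one_or_eq_sq_of_orderOf_eq_four {g t : G} (hg : orderOf g = 4) (ht : t ∈ zpowers g)
    (ht2 : t ^ 2 = 1) : t = 1 ∨ t = g ^ 2 := by
  obtain ⟨k, rfl⟩ := ht
  have h4 : ((orderOf g : ℕ) : ℤ) ∣ k * 2 := by
    rw [orderOf_dvd_iff_zpow_eq_one, zpow_mul]; exact_mod_cast ht2
  obtain ⟨m, rfl⟩ : (2 : ℤ) ∣ k := by rw [hg] at h4; omega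
  have hg2 : orderOf (g ^ 2) = 2 := by rw [orderOf_pow' g two_ne_zero, hg]; rfl
  refine (mem_zpowers_iff_of_orderOf_eq_two hg2).mp ⟨m, ?_⟩
  change (g ^ 2) ^ m = g ^ (2 * m)
  rw [zpow_mul, zpow_ofNat]

lemma index_inf_eq_four {H K : Subgroup G} (hH : H.index = 2) (hK : K.index = 2) (hHK : H ≠ K) :
    (H ⊓ K).index = 4 := by
  have hprod : K.relIndex H * 2 = (H ⊓ K).index := by
    rw [← inf_relIndex_left, ← hH, relIndex_mul_index inf_le_left]
  have hne0 : (H ⊓ K).index ≠ 0 := index_inf_ne_zero (by omega) (by omega)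
  have hne1 : K.relIndex H ≠ 1 := by
    intro h
    have hle : H ≤ K := relIndex_eq_one.mp h
    have := relIndex_mul_index hle
    rw [hH, hK] at this
    exact hHK (le_antisymm hle (relIndex_eq_one.mp (by omega)))
  have hle := index_inf_le (H := H) (K := K)
  rw [hH, hK] at hle
  omega

lemma map_a_two_eq_of_index_eq_two {H : Subgroup G} (hH : H.index = 2) {z : G}
    (hsq : ∀ g ∈ H, g ^ 2 = 1 ∨ g ^ 2 = z) {f : QuaternionGroup 2 →* G}
    (hf : Function.Injective f) : f (.a 2) = z := by
  have key : ∀ v, v ^ 2 = .a 2 → f v ∈ H → f (.a 2) = z := by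
    intro v hv hvH
    rcases hsq _ hvH with h | h <;> rw [← map_pow, hv] at h
    · exact absurd (hf (h.trans (map_one f).symm)) (by decide)
    · exact h
  by_cases hA : f (.a 1) ∈ H
  · exact key _ (by decide) hA
  by_cases hB : f (.xa 0) ∈ H
  · exact key _ (by decide) hB
  refine key (.a 1 * .xa 0) (by decide) ?_
  rw [map_mul, mul_mem_iff_of_index_two hH]
  exact iff_of_false hA hB

variable {x : G}

lemma sq_eq_one_or_eq_r_two_of_mem_range_sup_zpowers (hx : orderOf x = 2) (hxc : x ∈ center G)
    (ι : DihedralGroup 4 →* G) {g : G} (hg : g ∈ ι.range ⊔ zpowers x) :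
    g ^ 2 = 1 ∨ g ^ 2 = ι (.r 2) := by
  obtain ⟨p, hp⟩ := exists_sq_eq_of_mem_range_sup_zpowers ι hxc hx hg
  rcases DihedralGroup.sq_eq_one_or_eq_r_two p with h | h <;> simp [hp, h]

lemma notMem_range_of_map_a_two_ne (hx : orderOf x = 2) {f : QuaternionGroup 2 →* G}
    (hf : Function.Injective f) (hfx : f (.a 2) ≠ x) : x ∉ f.range := by
  rintro ⟨v, rfl⟩
  by_cases h1 : v = 1
  · simp [h1] at hx
  by_cases h2 : v = .a 2
  · exact hfx (h2 ▸ rfl)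
  have hv : f (v ^ 2) = f 1 := by
    rw [map_pow, map_one, ← pow_orderOf_eq_one (f v), hx]
  exact absurd (hf hv) (by rw [QuaternionGroup.sq_eq_a_two_of_ne v h1 h2]; decide)

lemma sq_eq_map_a_two_of_notMem (hx : orderOf x = 2) (hxc : x ∈ center G)
    {f : QuaternionGroup 2 →* G} {H : Subgroup G}
    (hfH : f (.a 2) ∈ H) (hxH : x ∈ H) {t : G} (ht : t ∈ f.range ⊔ zpowers x) (htH : t ∉ H) :
    t ^ 2 = f (.a 2) := by
  obtain ⟨v, w, hw, rfl⟩ := exists_eq_mul_of_mem_range_sup_zpowers f hxc ht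
  have hv : f v ∉ H := fun h => htH (mul_mem h (zpowers_le.mpr hxH hw))
  rw [sq_mul_of_mem_zpowers hx hxc _ hw, ← map_pow, QuaternionGroup.sq_eq_a_two_of_ne v
    (by rintro rfl; exact hv (by simp [one_mem])) (by rintro rfl; exact hv hfH)]

lemma range_not_le_range_sup_zpowers (hx : orderOf x = 2) (hxc : x ∈ center G)
    {ι : DihedralGroup 4 →* G} (hι : Function.Injective ι)
    (hxι : x ∉ ι.range) {f : QuaternionGroup 2 →* G} (hf : Function.Injective f) :
    ¬ f.range ≤ ι.range ⊔ zpowers x := by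
  intro hle
  rw [← range_prodZPowersHom ι hxc] at hle
  have hψ := prodZPowersHom_injective ι hxc hι hx hxι
  let φ : QuaternionGroup 2 →* DihedralGroup 4 × zpowers x :=
    (MonoidHom.ofInjective hψ).symm.toMonoidHom.comp (f.codRestrict _ fun v => hle ⟨v, rfl⟩)
  refine QuaternionGroup.not_injective_to_dihedral_prod (fun w => ?_) φ ?_
  · rw [← hx, ← Nat.card_zpowers]; exact pow_card_eq_one'
  · intro a b h
    exact hf (congrArg Subtype.val ((MonoidHom.ofInjective hψ).symm.injective h))

lemma pow_four_eq_of_notMem (hx : orderOf x = 2) (hxc : x ∈ center G) (hG : Nat.card G = 32)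
    {H K : Subgroup G} (hH : H.index = 2) (hK : K.index = 2) (hHK : H ≠ K) (hxH : x ∈ H)
    (hxK : x ∈ K) (hH4 : ∀ g ∈ H, g ^ 4 = 1)
    {u : G} (huH : u ∉ H) (huK : u ∉ K) (hu : u ^ 4 ≠ 1) (hxu : x ≠ u ^ 4)
    {t : G} (htH : t ∉ H) (htK : t ∉ K) : t ^ 4 = u ^ 4 := by
  have : Finite G := Nat.finite_of_card_ne_zero (by rw [hG]; norm_num)
  have hu2 : u ^ 2 ∈ H ⊓ K := ⟨sq_mem_of_index_two hH u, sq_mem_of_index_two hK u⟩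
  have hord : orderOf (u ^ 2) = 4 :=
    orderOf_eq_prime_pow (p := 2) (n := 1) (by rwa [← pow_mul]) (hH4 _ hu2.1)
  have hxu2 : x ∉ (zpowers (u ^ 2)).subtype.range := by
    rw [range_subtype]
    intro h
    rcases eq_one_or_eq_sq_of_orderOf_eq_four hord h (by rw [← hx, pow_orderOf_eq_one])
      with h1 | h1
    · simp [h1] at hx
    · exact hxu (by rw [h1, ← pow_mul])
  have hJ : (zpowers (u ^ 2)).subtype.range ⊔ zpowers x = H ⊓ K := by
    refine eq_of_le_of_card_ge
      (sup_le (by rw [range_subtype, zpowers_le]; exact hu2) (zpowers_le.mpr ⟨hxH, hxK⟩)) ?_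
    rw [card_range_sup_zpowers _ hxc (subtype_injective _) hx hxu2, Nat.card_zpowers, hord]
    have := (H ⊓ K).index_mul_card
    rw [index_inf_eq_four hH hK hHK, hG] at this
    omega
  have htu : t * u⁻¹ ∈ H ⊓ K :=
    ⟨(mul_mem_iff_of_index_two hH).mpr (iff_of_false htH (inv_mem_iff.not.mpr huH)),
      (mul_mem_iff_of_index_two hK).mpr (iff_of_false htK (inv_mem_iff.not.mpr huK))⟩
  rw [← hJ] at htu
  obtain ⟨⟨a, ha⟩, w, hw, htu⟩ := exists_eq_mul_of_mem_range_sup_zpowers _ hxc htu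
  have hau : Commute a u := by
    obtain ⟨k, rfl⟩ := ha
    exact ((Commute.refl u).pow_left 2).zpow_left k
  have ha4 : a ^ 4 = 1 := orderOf_dvd_iff_pow_eq_one.mp (hord ▸ orderOf_dvd_of_mem_zpowers ha)
  have ht : t = a * u * w := by
    rw [mul_assoc, (commute_of_mem_zpowers hxc u hw).eq, ← mul_assoc]
    exact eq_mul_of_mul_inv_eq htu
  rw [ht, show 4 = 2 * 2 from rfl, pow_mul, sq_mul_of_mem_zpowers hx hxc _ hw, ← pow_mul,
    hau.mul_pow, ha4, one_mul]

end

lemma pow_four_eq_one_of_dihedral_quaternion {G : Type*} [Group G] (hG : Nat.card G = 32)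
    {x : G} (hx : orderOf x = 2) (hxc : x ∈ center G)
    {ι : DihedralGroup 4 →* G} (hι : Function.Injective ι) (hxι : x ∉ ι.range)
    {f : QuaternionGroup 2 →* G} (hf : Function.Injective f)
    {y : G} (hyH : y ∉ ι.range ⊔ zpowers x) (hy2 : y ^ 2 ∈ zpowers x) (g : G) : g ^ 4 = 1 := by
  set H := ι.range ⊔ zpowers x
  set K := f.range ⊔ zpowers x
  set z := ι (.r 2)
  have hHi : H.index = 2 :=
    index_range_sup_zpowers ι hxc hι hx hxι (by rw [hG, DihedralGroup.nat_card])
  have hHsq : ∀ g ∈ H, g ^ 2 = 1 ∨ g ^ 2 = z :=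
    fun _ => sq_eq_one_or_eq_r_two_of_mem_range_sup_zpowers hx hxc ι
  have hH4 : ∀ g ∈ H, g ^ 4 = 1 := fun _ =>
    pow_four_eq_one_of_mem_range_sup_zpowers ι hxc hx DihedralGroup.pow_four_eq_one
  have hK4 : ∀ g ∈ K, g ^ 4 = 1 := fun _ =>
    pow_four_eq_one_of_mem_range_sup_zpowers f hxc hx QuaternionGroup.pow_four_eq_one
  have hfz : f (.a 2) = z := map_a_two_eq_of_index_eq_two hHi hHsq hf
  have hz1 : z ≠ 1 := fun h => absurd (hι (h.trans (map_one ι).symm)) (by decide)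
  have hzx : z ≠ x := fun h => hxι ⟨_, h⟩
  have hKi : K.index = 2 :=
    index_range_sup_zpowers f hxc hf hx (notMem_range_of_map_a_two_ne hx hf (hfz ▸ hzx))
      (by rw [hG, Nat.card_eq_fintype_card, QuaternionGroup.card])
  have hHK : H ≠ K := fun h =>
    range_not_le_range_sup_zpowers hx hxc hι hxι hf (le_sup_left.trans h.ge)
  have hxH : x ∈ H := mem_sup_right (mem_zpowers x)
  have hxK : x ∈ K := mem_sup_right (mem_zpowers x)
  have hyK : y ∉ K := by
    intro hyK
    have hy := sq_eq_map_a_two_of_notMem hx hxc (hfz ▸ mem_sup_left ⟨_, rfl⟩) hxH hyK hyH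
    rcases (mem_zpowers_iff_of_orderOf_eq_two hx).mp hy2 with h | h <;> rw [hy, hfz] at h
    exacts [hz1 h, hzx h]
  have hy4 : y ^ 4 = 1 := by
    rw [show 4 = 2 * 2 from rfl, pow_mul]
    exact orderOf_dvd_iff_pow_eq_one.mp ((orderOf_dvd_of_mem_zpowers hy2).trans (dvd_of_eq hx))
  by_contra hg
  have hg4 : g ^ 4 = z := by
    rw [show g ^ 4 = (g ^ 2) ^ 2 by rw [← pow_mul]]
    exact (hHsq _ (sq_mem_of_index_two hHi g)).resolve_left (by rwa [← pow_mul])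
  have hyg : y ^ 4 = g ^ 4 := pow_four_eq_of_notMem hx hxc hG hHi hKi hHK hxH hxK hH4
    (fun h => hg (hH4 g h)) (fun h => hg (hK4 g h)) hg (hg4 ▸ hzx.symm) hyH hyK
  exact hg (hyg ▸ hy4)

theorem stmt18_general (G : Type*) [Group G] (hG : Nat.card G = 32)
    (D : Subgroup G) (x y : G)
    (hD : Nonempty (D ≃* DihedralGroup 4))
    (hxnorm : (Subgroup.zpowers x).Normal)
    (hx : orderOf x = 2)
    (hint : D ⊓ Subgroup.zpowers x = ⊥)
    (hgen : (D ⊔ Subgroup.zpowers x) ⊔ Subgroup.zpowers y = ⊤)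
    (hy2 : y ^ 2 ∈ Subgroup.zpowers x)
    (hQ8 : ∃ f : QuaternionGroup 2 →* G, Function.Injective f) :
    (∀ g : G, g ^ 4 = 1) ∧
    ¬ ∃ f : Multiplicative (ZMod 8) →* G, Function.Injective f := by
  obtain ⟨e⟩ := hD
  obtain ⟨f, hf⟩ := hQ8
  have hxc := mem_center_of_zpowers_normal hxnorm hx
  let ι : DihedralGroup 4 →* G := D.subtype.comp e.symm.toMonoidHom
  have hι : Function.Injective ι := D.subtype_injective.comp e.symm.injective
  have hιD : ι.range = D := by
    ext g
    exact ⟨fun ⟨p, hp⟩ => hp ▸ (e.symm p).2, fun hg => ⟨e ⟨g, hg⟩, by simp [ι]⟩⟩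
  have hxι : x ∉ ι.range := fun h => by
    have hxD : x ∈ D ⊓ zpowers x := ⟨hιD ▸ h, mem_zpowers x⟩
    rw [hint, mem_bot] at hxD
    simp [hxD] at hx
  have hyH : y ∉ ι.range ⊔ zpowers x := fun h => by
    have hcard := card_range_sup_zpowers ι hxc hι hx hxι
    rw [hιD] at h hcard
    rw [sup_eq_left.mpr (zpowers_le.mpr h)] at hgen
    rw [hgen, card_top, hG, DihedralGroup.nat_card] at hcard
    norm_num at hcard
  have hexp := pow_four_eq_one_of_dihedral_quaternion hG hx hxc hι hxι hf hyH hy2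
  refine ⟨hexp, fun ⟨φ, hφ⟩ => ?_⟩
  have h4 : Multiplicative.ofAdd (1 : ZMod 8) ^ 4 = 1 := hφ (by rw [map_pow, hexp, map_one])
  exact absurd h4 (by decide)

/-- Let `G` be a group of order 32 with `G = (D × ⟨x⟩)⟨y⟩`, where `⟨x⟩ ⊴ G` has
order 2, `D ≅ D₈`, `D ∩ ⟨x⟩ = 1`, `x` commutes with `D`, and `y² ∈ ⟨x⟩`.
If `Q₈` embeds into `G`, then `G` has exponent 4; in particular `C₈` does not embed
into `G`. -/
theorem stmt18 (G : Type*) [Group G] (hG : Nat.card G = 32)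
    (D : Subgroup G) (x y : G)
    (hD : Nonempty (D ≃* DihedralGroup 4))
    (hxnorm : (Subgroup.zpowers x).Normal)
    (hx : orderOf x = 2)
    (hcomm : ∀ d ∈ D, Commute d x)
    (hint : D ⊓ Subgroup.zpowers x = ⊥)
    (hgen : (D ⊔ Subgroup.zpowers x) ⊔ Subgroup.zpowers y = ⊤)
    (hy2 : y ^ 2 ∈ Subgroup.zpowers x)
    (hQ8 : ∃ f : QuaternionGroup 2 →* G, Function.Injective f) :
    (∀ g : G, g ^ 4 = 1) ∧
    ¬ ∃ f : Multiplicative (ZMod 8) →* G, Function.Injective f :=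
  stmt18_general G hG D x y hD hxnorm hx hint hgen hy2 hQ8
end

section
/- Let G be a finite group such that 3^3 exactly divides |G|, and suppose G has a subgroup H such that 3 divides |Z(H)| and H/Z(H) contains a subgroup isomorphic to A_6. Then the cyclic group C_9 does not embed into G. -/
/-!
Suppose `G` had an element of order 9. Since `3 ∣ |Z(H)|` and `360 ∣ |H/Z(H)|`, the bound
`3⁴ ∤ |G|` forces `H` to contain a Sylow 3-subgroup of `G`, the copy of `A₆` to contain one of
`H/Z(H)`, and `9 ∤ |Z(H)|`. Conjugating, we get `x ∈ H` of order 9, and its image in `H/Z(H)` is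
conjugate into `A₆`. There it has order 3, and is real: some `h` has `h x h⁻¹ = w x⁻¹` with `w`
central. Conjugating the central element `x³` by `h` then gives `w³ = x⁶ ≠ 1`, so `w` has order 9
in `Z(H)`, which is impossible.
-/

open Equiv

theorem IsConj.inv {α : Type*} [Group α] {a b : α} (h : IsConj a b) : IsConj a⁻¹ b⁻¹ := by
  obtain ⟨c, rfl⟩ := isConj_iff.1 h
  exact isConj_iff.2 ⟨c, conj_inv.symm⟩

theorem IsConj.pow_eq_one_iff {α : Type*} [Monoid α] {a b : α} (h : IsConj a b) (n : ℕ) :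
    a ^ n = 1 ↔ b ^ n = 1 :=
  ⟨fun ha => isConj_one_left.1 (ha ▸ (h.pow n).symm),
    fun hb => isConj_one_left.1 (hb ▸ h.pow n)⟩

theorem IsConj.orderOf_eq {α : Type*} [Monoid α] {a b : α} (h : IsConj a b) :
    orderOf a = orderOf b :=
  orderOf_eq_orderOf_iff.2 h.pow_eq_one_iff

theorem Equiv.Perm.pow_prime_pow_eq_one_of_card_lt {α : Type*} [Fintype α] [DecidableEq α]
    {p k : ℕ} (hp : p.Prime) {σ : Perm α} (hσ : σ ^ p ^ (k + 1) = 1)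
    (hα : Fintype.card α < p ^ (k + 1)) : σ ^ p ^ k = 1 := by
  rw [← orderOf_dvd_iff_pow_eq_one, ← Perm.lcm_cycleType, Multiset.lcm_dvd]
  intro n hn
  obtain ⟨i, hi, rfl⟩ := (Nat.dvd_prime_pow hp).1
    ((Perm.dvd_of_mem_cycleType hn).trans (orderOf_dvd_of_pow_eq_one hσ))
  have hlt : p ^ i < p ^ (k + 1) :=
    (Perm.le_card_support_of_mem_cycleType hn).trans_lt ((Finset.card_le_univ _).trans_lt hα)
  exact pow_dvd_pow p (by have := (Nat.pow_lt_pow_iff_right hp.one_lt).1 hlt; omega)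

theorem alternatingGroup.pow_prime_pow_eq_one_of_card_lt {α : Type*} [Fintype α]
    [DecidableEq α] {p k : ℕ} (hp : p.Prime) {σ : alternatingGroup α}
    (hσ : σ ^ p ^ (k + 1) = 1) (hα : Fintype.card α < p ^ (k + 1)) : σ ^ p ^ k = 1 :=
  Subtype.ext <| Perm.pow_prime_pow_eq_one_of_card_lt hp (congrArg Subtype.val hσ) hα

theorem Equiv.Perm.not_centralizer_le_alternatingGroup_of_pow_prime_eq_one {α : Type*}
    [Fintype α] [DecidableEq α] {p : ℕ} (hp : p.Prime) {σ : Perm α} (hσ : σ ^ p = 1)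
    (hα : p + 2 ≤ Fintype.card α) :
    ¬ Subgroup.centralizer {σ} ≤ alternatingGroup α := by
  rw [Perm.centralizer_le_alternating_iff]
  rintro ⟨-, hcard, hcount⟩
  have hrep : σ.cycleType = Multiset.replicate (Multiset.card σ.cycleType) p := by
    refine Multiset.eq_replicate.2 ⟨rfl, fun n hn => ?_⟩
    have := Perm.two_le_of_mem_cycleType hn
    rcases (Nat.dvd_prime hp).1 ((Perm.dvd_of_mem_cycleType hn).trans
      (orderOf_dvd_of_pow_eq_one hσ)) with rfl | rfl <;> omega
  have hk := hcount p
  rw [hrep, Multiset.count_replicate_self] at hk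
  rw [hrep, Multiset.sum_replicate, smul_eq_mul] at hcard
  have := hp.two_le
  nlinarith

theorem alternatingGroup.isConj_of_not_centralizer_le {α : Type*} [Fintype α] [DecidableEq α]
    {σ τ : alternatingGroup α} (hστ : IsConj (σ : Perm α) τ)
    (hσ : ¬ Subgroup.centralizer {(σ : Perm α)} ≤ alternatingGroup α) : IsConj σ τ := by
  obtain ⟨π, hπ⟩ := isConj_iff.1 hστ
  obtain ⟨ρ, hρ, hρsign⟩ := SetLike.not_le_iff_exists.1 hσ
  rw [Subgroup.mem_centralizer_singleton_iff] at hρ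
  rw [Perm.mem_alternatingGroup] at hρsign
  rcases Int.units_eq_one_or (Perm.sign π) with hπsign | hπsign
  · exact isConj_iff.2 ⟨⟨π, hπsign⟩, Subtype.ext (by simpa using hπ)⟩
  · -- an odd `π` is corrected by the odd permutation `ρ`, which commutes with `σ`
    have hπρ : Perm.sign (π * ρ) = 1 := by
      rw [map_mul, hπsign, (Int.units_eq_one_or _).resolve_left hρsign]; rfl
    refine isConj_iff.2 ⟨⟨π * ρ, hπρ⟩, Subtype.ext ?_⟩
    simp only [Subgroup.coe_mul, Subgroup.coe_inv, mul_inv_rev]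
    rw [← hπ, mul_assoc π, hρ]
    group

theorem alternatingGroup.isConj_inv_of_pow_prime_eq_one {α : Type*} [Fintype α] [DecidableEq α]
    {p : ℕ} (hp : p.Prime) (hα : p + 2 ≤ Fintype.card α) {σ : alternatingGroup α}
    (hσ : σ ^ p = 1) : IsConj σ σ⁻¹ := by
  refine isConj_of_not_centralizer_le ?_ ?_
  · rw [Subgroup.coe_inv, Perm.isConj_iff_cycleType_eq, Perm.cycleType_inv]
  · exact Perm.not_centralizer_le_alternatingGroup_of_pow_prime_eq_one hp
      (by rw [← Subgroup.coe_pow, hσ, Subgroup.coe_one]) hα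

theorem exists_isConj_mem_of_not_dvd_index {Q : Type*} [Group Q] [Finite Q] {p : ℕ}
    [Fact p.Prime] {K : Subgroup Q} (hK : ¬ p ∣ K.index) {u : Q} {k : ℕ} (hu : u ^ p ^ k = 1) :
    ∃ a : K, IsConj u a := by
  obtain ⟨P⟩ : Nonempty (Sylow p K) := inferInstance
  let S : Sylow p Q := (P.isPGroup'.map K.subtype).toSylow <| by
    rw [Subgroup.index_map_subtype]
    exact (Fact.out : p.Prime).not_dvd_mul P.not_dvd_index hK
  have hu : IsPGroup p (Subgroup.zpowers u) := by
    obtain ⟨i, -, hi⟩ := (Nat.dvd_prime_pow Fact.out).1 (orderOf_dvd_of_pow_eq_one hu)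
    exact IsPGroup.of_card (by rw [Nat.card_zpowers, hi])
  obtain ⟨R, hR⟩ := hu.exists_le_sylow
  obtain ⟨c, hc⟩ := MulAction.exists_smul_eq Q R S
  have hmem : c * u * c⁻¹ ∈ (P : Subgroup K).map K.subtype := by
    have := Subgroup.smul_mem_pointwise_smul u (MulAut.conj c) R (hR (Subgroup.mem_zpowers u))
    rwa [← Sylow.coe_subgroup_smul, hc, MulAut.smul_def, MulAut.conj_apply] at this
  obtain ⟨a, -, ha⟩ := Subgroup.mem_map.1 hmem
  exact ⟨a, isConj_iff.2 ⟨c, ha.symm⟩⟩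

theorem pow_eq_one_and_isConj_inv_of_not_dvd_index {A Q : Type*} [Group A] [Group Q]
    [Finite Q] {p : ℕ} [Fact p.Prime] {K : Subgroup Q} (hK : ¬ p ∣ K.index) (e : A ≃* K)
    (hpow : ∀ a : A, a ^ p ^ 2 = 1 → a ^ p = 1) (hreal : ∀ a : A, a ^ p = 1 → IsConj a a⁻¹)
    {u : Q} (hu : u ^ p ^ 2 = 1) : u ^ p = 1 ∧ IsConj u u⁻¹ := by
  let φ : A →* Q := K.subtype.comp e.toMonoidHom
  have hφ : Function.Injective φ := K.subtype_injective.comp e.injective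
  obtain ⟨k, huk⟩ := exists_isConj_mem_of_not_dvd_index hK hu
  obtain ⟨a, rfl⟩ := e.surjective k
  replace huk : IsConj u (φ a) := huk
  have ha : a ^ p = 1 := hpow a (hφ (by rw [map_pow, map_one, ← huk.pow_eq_one_iff, hu]))
  refine ⟨(huk.pow_eq_one_iff p).2 (by rw [← map_pow, ha, map_one]), ?_⟩
  have hφa : IsConj (φ a) (φ a)⁻¹ := map_inv φ a ▸ φ.map_isConj (hreal a ha)
  exact huk.trans (hφa.trans huk.symm.inv)

open QuotientGroup in
theorem sq_dvd_card_center_of_isConj_inv {H : Type*} [Group H] {p : ℕ} (hp : p.Prime)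
    (hp2 : p ≠ 2) {x : H} (hx : orderOf x = p ^ 2) (hxp : (x : H ⧸ Subgroup.center H) ^ p = 1)
    (hreal : IsConj (x : H ⧸ Subgroup.center H) (x : H ⧸ Subgroup.center H)⁻¹) :
    p ^ 2 ∣ Nat.card (Subgroup.center H) := by
  obtain ⟨c, hc⟩ := isConj_iff.1 hreal
  obtain ⟨h, rfl⟩ := mk_surjective c
  set w := h * x * h⁻¹ * x with hw_def
  have hw : w ∈ Subgroup.center H := by
    rw [← eq_one_iff, mk_mul, mk_mul, mk_mul, mk_inv, hc, inv_mul_cancel]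
  have hxpZ : x ^ p ∈ Subgroup.center H := by rwa [← eq_one_iff, mk_pow]
  have hwp : w ^ p = x ^ (2 * p) := by
    have hconj : h * x ^ p * h⁻¹ = x ^ p := by
      rw [Subgroup.mem_center_iff.1 hxpZ h, mul_inv_cancel_right]
    have hcomm : Commute w x⁻¹ := (Subgroup.mem_center_iff.1 hw x⁻¹).symm
    rw [← conj_pow, show h * x * h⁻¹ = w * x⁻¹ by rw [hw_def]; group, hcomm.mul_pow, inv_pow,
      mul_inv_eq_iff_eq_mul] at hconj
    rw [hconj, two_mul, pow_add]
  have hw_order : orderOf w = p ^ 2 := by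
    refine orderOf_eq_prime_pow (hp := ⟨hp⟩) (n := 1) ?_ ?_
    · rw [pow_one, hwp, ← orderOf_dvd_iff_pow_eq_one, hx, pow_two,
        Nat.mul_dvd_mul_iff_right hp.pos]
      exact fun h2 => hp2 ((Nat.prime_dvd_prime_iff_eq hp Nat.prime_two).1 h2)
    · rw [pow_succ, pow_one, pow_mul, hwp, ← pow_mul, ← orderOf_dvd_iff_pow_eq_one, hx]
      exact ⟨2, by ring⟩
  exact hw_order ▸ Subgroup.orderOf_dvd_natCard _ hw

theorem not_three_dvd_of_not_three_pow_four_dvd {a b c : ℕ}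
    (h : ¬ 3 ^ 4 ∣ 360 * a * (3 * b) * c) : ¬ 3 ∣ a ∧ ¬ 3 ^ 2 ∣ 3 * b ∧ ¬ 3 ∣ c :=
  ⟨fun ⟨k, hk⟩ => h ⟨40 * k * b * c, by rw [hk]; ring⟩,
    fun ⟨k, hk⟩ => h ⟨40 * a * k * c, by rw [hk]; ring⟩,
    fun ⟨k, hk⟩ => h ⟨40 * a * b * k, by rw [hk]; ring⟩⟩

theorem stmt19_general (G : Type*) [Group G] [Finite G]
    (h81 : ¬ 3 ^ 4 ∣ Nat.card G)
    (H : Subgroup G)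
    (hZ : 3 ∣ Nat.card (Subgroup.center H))
    (hA6 : ∃ K : Subgroup (H ⧸ Subgroup.center H),
      Nonempty (K ≃* alternatingGroup (Fin 6))) :
    ¬ ∃ f : Multiplicative (ZMod 9) →* G, Function.Injective f := by
  rintro ⟨f, hf⟩
  obtain ⟨K, ⟨e⟩⟩ := hA6
  obtain ⟨c, hc⟩ := hZ
  have hcard : Nat.card G = 360 * K.index * (3 * c) * H.index := by
    rw [← hc, ← H.card_mul_index, (Subgroup.center H).card_eq_card_quotient_mul_card_subgroup,
      ← K.card_mul_index, Nat.card_congr e.toEquiv, nat_card_alternatingGroup, Nat.card_fin]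
    rfl
  obtain ⟨hK, hZ9, hH⟩ := not_three_dvd_of_not_three_pow_four_dvd (hcard ▸ h81)
  have hg : orderOf (f (.ofAdd 1)) = 3 ^ 2 := by
    rw [orderOf_injective f hf, orderOf_ofAdd_eq_addOrderOf, ZMod.addOrderOf_one]; rfl
  obtain ⟨x, hx⟩ := exists_isConj_mem_of_not_dvd_index hH (hg ▸ pow_orderOf_eq_one _)
  have hx_order : orderOf x = 3 ^ 2 := by rw [← Subgroup.orderOf_coe, ← hx.orderOf_eq, hg]
  obtain ⟨hxp, hxreal⟩ := pow_eq_one_and_isConj_inv_of_not_dvd_index hK e.symm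
    (fun σ hσ => alternatingGroup.pow_prime_pow_eq_one_of_card_lt (k := 1) Nat.prime_three hσ
      (by simp))
    (fun σ hσ => alternatingGroup.isConj_inv_of_pow_prime_eq_one Nat.prime_three (by simp) hσ)
    (u := (x : H ⧸ Subgroup.center H))
    (by rw [← QuotientGroup.mk_pow, ← hx_order, pow_orderOf_eq_one, QuotientGroup.mk_one])
  exact hZ9 <| hc ▸
    sq_dvd_card_center_of_isConj_inv Nat.prime_three (by norm_num) hx_order hxp hxreal

/-- Let `G` be a finite group with `3³` exactly dividing `|G|`, and suppose `G` has a
subgroup `H` such that `3` divides `|Z(H)|` and `H/Z(H)` has a subgroup isomorphic to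
`A₆`.  Then `C₉` does not embed into `G`. -/
theorem stmt19 (G : Type*) [Group G] [Finite G]
    (h27 : 3 ^ 3 ∣ Nat.card G) (h81 : ¬ 3 ^ 4 ∣ Nat.card G)
    (H : Subgroup G)
    (hZ : 3 ∣ Nat.card (Subgroup.center H))
    (hA6 : ∃ K : Subgroup (H ⧸ Subgroup.center H),
      Nonempty (K ≃* alternatingGroup (Fin 6))) :
    ¬ ∃ f : Multiplicative (ZMod 9) →* G, Function.Injective f :=
  stmt19_general G h81 H hZ hA6
end
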